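/- arXiv:solv-int/9801022 — 10 statements merged into one kernel-verified Lean document; each statement's English description precedes it below -/
import Mathlib

section
/- The half-period theta identity: for all complex x, y, θ₄(x|τ/2)·θ₃(y|τ/2) − θ₄(y|τ/2)·θ₃(x|τ/2) = 2·θ₁(x+y|τ)·θ₁(x−y|τ). -/
open Complex

noncomputable def theta1 (τ z : ℂ) : ℂ :=
  ∑' k : ℤ, Complex.exp (Real.pi * Complex.I * τ * (k + 1/2)^2 +
    2 * Real.pi * Complex.I * (z + 1/2) * (k + 1/2))

noncomputable def theta2 (τ z : ℂ) : ℂ :=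
  ∑' k : ℤ, Complex.exp (Real.pi * Complex.I * τ * (k + 1/2)^2 +
    2 * Real.pi * Complex.I * z * (k + 1/2))

noncomputable def theta3 (τ z : ℂ) : ℂ :=
  ∑' k : ℤ, Complex.exp (Real.pi * Complex.I * τ * k^2 +
    2 * Real.pi * Complex.I * z * k)

noncomputable def theta4 (τ z : ℂ) : ℂ :=
  ∑' k : ℤ, Complex.exp (Real.pi * Complex.I * τ * k^2 +
    2 * Real.pi * Complex.I * (z + 1/2) * k)

/-!
Write `θ₃(z|τ/2) = ∑ Tₙ(z)` and note `Tₙ(z + ½) = (-1)ⁿ Tₙ(z)`. The left side is then the double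
series `∑ ((-1)ᵐ - (-1)ⁿ) Tₘ(x) Tₙ(y)`, whose terms with `m ≡ n (mod 2)` vanish. Substituting
`m = a + b + 1`, `n = a - b` in the others, the identity
`(a + b + 1)² + (a - b)² = 2((a + ½)² + (b + ½)²)` turns each of them into twice a term of the
product series of `θ₁(x + y|τ) θ₁(x - y|τ)`.
-/

section NegOnePow

variable {α : Type*} [DivisionRing α] {m n : ℤ}

lemma neg_one_zpow_eq_of_even_sub (h : Even (m - n)) : (-1 : α) ^ m = (-1) ^ n := by
  rw [← sub_add_cancel m n, zpow_add₀ (by norm_num), h.neg_one_zpow, one_mul]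

lemma neg_one_zpow_eq_neg_of_odd_sub (h : Odd (m - n)) : (-1 : α) ^ m = -(-1) ^ n := by
  rw [← sub_add_cancel m n, zpow_add₀ (by norm_num), h.neg_one_zpow, neg_one_mul]

end NegOnePow

def oddDiffParam (q : ℤ × ℤ) : ℤ × ℤ := (q.1 + q.2 + 1, q.1 - q.2)

lemma oddDiffParam_injective : Function.Injective oddDiffParam := by
  intro p q h
  simp only [oddDiffParam, Prod.mk.injEq] at h
  ext <;> omega

lemma mem_range_oddDiffParam {p : ℤ × ℤ} (h : Odd (p.1 - p.2)) : p ∈ Set.range oddDiffParam := by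
  obtain ⟨c, hc⟩ := h
  exact ⟨(p.2 + c, c), by ext <;> simp only [oddDiffParam] <;> omega⟩

lemma hasSum_comp_oddDiffParam_iff {α : Type*} [AddCommMonoid α] [TopologicalSpace α]
    {f : ℤ × ℤ → α} {a : α} (hf : ∀ p : ℤ × ℤ, Even (p.1 - p.2) → f p = 0) :
    HasSum (f ∘ oddDiffParam) a ↔ HasSum f a :=
  oddDiffParam_injective.hasSum_iff fun p hp =>
    hf p <| Int.not_odd_iff_even.mp fun hodd => hp (mem_range_oddDiffParam hodd)

lemma hasSum_mul_of_summable_norm {R ι ι' : Type*} [NormedRing R] [CompleteSpace R]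
    {f : ι → R} {g : ι' → R} (hf : Summable fun i => ‖f i‖) (hg : Summable fun j => ‖g j‖) :
    HasSum (fun p : ι × ι' => f p.1 * g p.2) ((∑' i, f i) * ∑' j, g j) :=
  hf.of_norm.hasSum.mul hg.of_norm.hasSum (summable_mul_of_summable_norm hf hg)

section JacobiTheta

variable {τ : ℂ}

lemma summable_norm_jacobiTheta₂_term (z : ℂ) (hτ : 0 < τ.im) :
    Summable fun n : ℤ => ‖jacobiTheta₂_term n z τ‖ :=
  summable_norm_iff.mpr ((summable_jacobiTheta₂_term_iff z τ).mpr hτ)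

lemma hasSum_jacobiTheta₂_mul_jacobiTheta₂ (z w : ℂ) (hτ : 0 < τ.im) :
    HasSum (fun p : ℤ × ℤ => jacobiTheta₂_term p.1 z τ * jacobiTheta₂_term p.2 w τ)
      (jacobiTheta₂ z τ * jacobiTheta₂ w τ) :=
  hasSum_mul_of_summable_norm (summable_norm_jacobiTheta₂_term z hτ)
    (summable_norm_jacobiTheta₂_term w hτ)

lemma jacobiTheta₂_term_add_half (n : ℤ) (z τ : ℂ) :
    jacobiTheta₂_term n (z + 1 / 2) τ = (-1) ^ n * jacobiTheta₂_term n z τ := by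
  rw [jacobiTheta₂_term, jacobiTheta₂_term, ← exp_pi_mul_I, ← exp_int_mul, ← Complex.exp_add]
  ring_nf

lemma theta3_eq_jacobiTheta₂ (τ z : ℂ) : theta3 τ z = jacobiTheta₂ z τ :=
  tsum_congr fun n => by rw [jacobiTheta₂_term]; ring_nf

lemma theta4_eq_theta3 (τ z : ℂ) : theta4 τ z = theta3 τ (z + 1 / 2) := rfl

noncomputable def theta1Term (τ z : ℂ) (k : ℤ) : ℂ :=
  cexp (Real.pi * I * τ * (k + 1 / 2) ^ 2 + 2 * Real.pi * I * (z + 1 / 2) * (k + 1 / 2))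

lemma theta1Term_eq_mul_jacobiTheta₂_term (τ z : ℂ) (k : ℤ) :
    theta1Term τ z k = cexp (Real.pi * I * τ / 4 + Real.pi * I * (z + 1 / 2)) *
      jacobiTheta₂_term k (z + 1 / 2 + τ / 2) τ := by
  rw [theta1Term, jacobiTheta₂_term, ← Complex.exp_add]
  ring_nf

lemma summable_norm_theta1Term (z : ℂ) (hτ : 0 < τ.im) :
    Summable fun k : ℤ => ‖theta1Term τ z k‖ := by
  simp only [theta1Term_eq_mul_jacobiTheta₂_term, norm_mul]
  exact (summable_norm_jacobiTheta₂_term _ hτ).mul_left _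

lemma hasSum_theta1_mul_theta1 (z w : ℂ) (hτ : 0 < τ.im) :
    HasSum (fun p : ℤ × ℤ => theta1Term τ z p.1 * theta1Term τ w p.2)
      (theta1 τ z * theta1 τ w) :=
  hasSum_mul_of_summable_norm (summable_norm_theta1Term z hτ) (summable_norm_theta1Term w hτ)

lemma jacobiTheta₂_term_half_mul_eq_theta1Term_mul (τ x y : ℂ) (a b : ℤ) :
    jacobiTheta₂_term (a + b + 1) (x + 1 / 2) (τ / 2) * jacobiTheta₂_term (a - b) y (τ / 2) =
      theta1Term τ (x + y) a * theta1Term τ (x - y) b := by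
  simp only [jacobiTheta₂_term, theta1Term, ← Complex.exp_add]
  push_cast
  ring_nf

end JacobiTheta

theorem half_period_theta_identity_minus (τ : ℂ) (hτ : 0 < τ.im) (x y : ℂ) :
    theta4 (τ/2) x * theta3 (τ/2) y - theta4 (τ/2) y * theta3 (τ/2) x =
      2 * theta1 τ (x + y) * theta1 τ (x - y) := by
  have hτ2 : 0 < (τ / 2).im := by simpa using hτ
  set T : ℤ → ℂ → ℂ := fun n z => jacobiTheta₂_term n z (τ / 2) with hT
  set g : ℤ × ℤ → ℂ := fun p => ((-1) ^ p.1 - (-1) ^ p.2) * (T p.1 x * T p.2 y) with hg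
  have hLHS : HasSum g
      (theta4 (τ/2) x * theta3 (τ/2) y - theta4 (τ/2) y * theta3 (τ/2) x) := by
    simp only [theta4_eq_theta3, theta3_eq_jacobiTheta₂, mul_comm (jacobiTheta₂ (y + 1 / 2) _)]
    refine ((hasSum_jacobiTheta₂_mul_jacobiTheta₂ (x + 1 / 2) y hτ2).sub
      (hasSum_jacobiTheta₂_mul_jacobiTheta₂ x (y + 1 / 2) hτ2)).congr_fun fun p => ?_
    simp only [hg, hT, jacobiTheta₂_term_add_half]
    ring
  have hg_even : ∀ p : ℤ × ℤ, Even (p.1 - p.2) → g p = 0 := fun p h => by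
    simp only [hg, neg_one_zpow_eq_of_even_sub h, sub_self, zero_mul]
  have hg_odd : ∀ q : ℤ × ℤ,
      g (oddDiffParam q) = 2 * (theta1Term τ (x + y) q.1 * theta1Term τ (x - y) q.2) := by
    rintro ⟨a, b⟩
    have hodd : Odd ((a + b + 1) - (a - b)) := ⟨b, by ring⟩
    rw [← jacobiTheta₂_term_half_mul_eq_theta1Term_mul, jacobiTheta₂_term_add_half]
    simp only [hg, hT, oddDiffParam, neg_one_zpow_eq_neg_of_odd_sub hodd]
    ring
  have hRHS := (hasSum_comp_oddDiffParam_iff hg_even).mp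
    (((hasSum_theta1_mul_theta1 (x + y) (x - y) hτ).mul_left 2).congr_fun hg_odd)
  rw [hLHS.unique hRHS, mul_assoc]
end

section
/- The quartic theta identity: for all complex x, y, z, Σ_{α=1}^{3} (−1)^α θ_{α+1}(0)·θ_{α+1}(x)·θ_{α+1}(y)·θ_{α+1}(z) = 2·θ₁((x+y+z)/2)·θ₁((x−y+z)/2)·θ₁((x+y−z)/2)·θ₁((x−y−z)/2). -/
open Complex

namespace QuarticAux

abbrev W : Type := (ℤ × ℤ) × (ℤ × ℤ)

/-- Generic one-variable theta-type term. -/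
noncomputable def E (τ w e : ℂ) (k : ℤ) : ℂ :=
  Complex.exp (Real.pi * Complex.I * τ * ((k : ℂ) + e) ^ 2 +
    2 * Real.pi * Complex.I * w * ((k : ℂ) + e))

lemma summable_norm_jt (z τ : ℂ) (hτ : 0 < τ.im) :
    Summable fun n : ℤ => ‖jacobiTheta₂_term n z τ‖ := by
  have h : Summable fun n : ℤ =>
      jacobiTheta₂_term n ((z.im : ℂ) * Complex.I) ((τ.im : ℂ) * Complex.I) := by
    refine (summable_jacobiTheta₂_term_iff _ _).mpr ?_
    simpa using hτ
  rw [← Complex.summable_ofReal]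
  refine h.congr fun n => ?_
  rw [norm_jacobiTheta₂_term, jacobiTheta₂_term, Complex.ofReal_exp]
  congr 1
  have hI : (Complex.I : ℂ) * Complex.I = -1 := Complex.I_mul_I
  push_cast
  linear_combination (2 * (Real.pi : ℂ) * n * z.im + Real.pi * (n : ℂ) ^ 2 * τ.im) * hI

lemma summable_norm_E (τ : ℂ) (hτ : 0 < τ.im) (w e : ℂ) :
    Summable fun k : ℤ => ‖E τ w e k‖ := by
  have h := (summable_norm_jt (w + τ * e) τ hτ).mul_left
      ‖Complex.exp (Real.pi * Complex.I * τ * e ^ 2 + 2 * Real.pi * Complex.I * w * e)‖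
  refine h.congr fun k => ?_
  rw [← norm_mul, E, jacobiTheta₂_term, ← Complex.exp_add]
  congr 2
  ring

/-- Generic quadruple product term. -/
noncomputable def G (τ w₁ w₂ w₃ w₄ e : ℂ) (v : W) : ℂ :=
  Complex.exp (Real.pi * Complex.I * τ *
      (((v.1.1 : ℂ) + e) ^ 2 + ((v.1.2 : ℂ) + e) ^ 2 +
        ((v.2.1 : ℂ) + e) ^ 2 + ((v.2.2 : ℂ) + e) ^ 2) +
    2 * Real.pi * Complex.I *
      (w₁ * ((v.1.1 : ℂ) + e) + w₂ * ((v.1.2 : ℂ) + e) +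
        w₃ * ((v.2.1 : ℂ) + e) + w₄ * ((v.2.2 : ℂ) + e)))

lemma G_eq_prod (τ w₁ w₂ w₃ w₄ e : ℂ) (v : W) :
    G τ w₁ w₂ w₃ w₄ e v =
      E τ w₁ e v.1.1 * E τ w₂ e v.1.2 * (E τ w₃ e v.2.1 * E τ w₄ e v.2.2) := by
  simp only [G, E, ← Complex.exp_add]
  congr 1
  ring

lemma summable_norm_G (τ : ℂ) (hτ : 0 < τ.im) (w₁ w₂ w₃ w₄ e : ℂ) :
    Summable fun v : W => ‖G τ w₁ w₂ w₃ w₄ e v‖ := by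
  have h := ((summable_norm_E τ hτ w₁ e).mul_norm (summable_norm_E τ hτ w₂ e)).mul_norm
    ((summable_norm_E τ hτ w₃ e).mul_norm (summable_norm_E τ hτ w₄ e))
  refine h.congr fun v => ?_
  rw [G_eq_prod]

lemma summable_G (τ : ℂ) (hτ : 0 < τ.im) (w₁ w₂ w₃ w₄ e : ℂ) :
    Summable fun v : W => G τ w₁ w₂ w₃ w₄ e v := (summable_norm_G τ hτ w₁ w₂ w₃ w₄ e).of_norm

lemma prod_theta (τ : ℂ) (hτ : 0 < τ.im) (w₁ w₂ w₃ w₄ e : ℂ) :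
    (∑' k : ℤ, E τ w₁ e k) * (∑' k : ℤ, E τ w₂ e k) *
      (∑' k : ℤ, E τ w₃ e k) * (∑' k : ℤ, E τ w₄ e k) =
    ∑' v : W, G τ w₁ w₂ w₃ w₄ e v := by
  have h₁ := summable_norm_E τ hτ w₁ e
  have h₂ := summable_norm_E τ hτ w₂ e
  have h₃ := summable_norm_E τ hτ w₃ e
  have h₄ := summable_norm_E τ hτ w₄ e
  calc (∑' k : ℤ, E τ w₁ e k) * (∑' k : ℤ, E τ w₂ e k) *
      (∑' k : ℤ, E τ w₃ e k) * (∑' k : ℤ, E τ w₄ e k)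
      = ((∑' k : ℤ, E τ w₁ e k) * (∑' k : ℤ, E τ w₂ e k)) *
        ((∑' k : ℤ, E τ w₃ e k) * (∑' k : ℤ, E τ w₄ e k)) := by ring
    _ = (∑' p : ℤ × ℤ, E τ w₁ e p.1 * E τ w₂ e p.2) *
        (∑' p : ℤ × ℤ, E τ w₃ e p.1 * E τ w₄ e p.2) := by
          rw [tsum_mul_tsum_of_summable_norm h₁ h₂, tsum_mul_tsum_of_summable_norm h₃ h₄]
    _ = ∑' v : W, (E τ w₁ e v.1.1 * E τ w₂ e v.1.2) * (E τ w₃ e v.2.1 * E τ w₄ e v.2.2) :=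
          tsum_mul_tsum_of_summable_norm (h₁.mul_norm h₂) (h₃.mul_norm h₄)
    _ = ∑' v : W, G τ w₁ w₂ w₃ w₄ e v := tsum_congr fun v => (G_eq_prod τ w₁ w₂ w₃ w₄ e v).symm

/-! ### Reindexing maps -/

def phiE : W → W := fun v => ((2 * v.1.1 - v.1.2 - v.2.1 - v.2.2, v.1.2), (v.2.1, v.2.2))

def phiO : W → W := fun v => ((2 * v.1.1 + 1 - v.1.2 - v.2.1 - v.2.2, v.1.2), (v.2.1, v.2.2))

def sigmaW : W ≃ W where
  toFun v := ((2 * v.1.1 - v.1.2 - v.2.1 - v.2.2, v.1.1 + 1),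
      (v.1.1 - v.1.2 - v.2.2, v.1.1 - v.2.1 - v.2.2))
  invFun v := ((v.1.2 - 1, v.1.2 - 1 - v.1.1 + v.2.2),
      (v.1.2 - 1 - v.1.1 + v.2.1, v.1.1 - v.2.1 - v.2.2))
  left_inv v := by
    obtain ⟨⟨t, l⟩, m, n⟩ := v
    simp only [Prod.mk.injEq, and_true, true_and]
    omega
  right_inv v := by
    obtain ⟨⟨t, l⟩, m, n⟩ := v
    simp only [Prod.mk.injEq, and_true, true_and]
    omega

def thetaW : W ≃ W where
  toFun v := ((v.1.2 + v.2.1 + v.2.2 - v.1.1 - 1, v.1.2), (v.2.1, v.2.2))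
  invFun v := ((v.1.2 + v.2.1 + v.2.2 - v.1.1 - 1, v.1.2), (v.2.1, v.2.2))
  left_inv v := by
    obtain ⟨⟨t, l⟩, m, n⟩ := v
    simp only [Prod.mk.injEq, and_true, true_and]
    omega
  right_inv v := by
    obtain ⟨⟨t, l⟩, m, n⟩ := v
    simp only [Prod.mk.injEq, and_true, true_and]
    omega

lemma phiE_inj : Function.Injective phiE := by
  intro a b h
  obtain ⟨⟨t, l⟩, m, n⟩ := a
  obtain ⟨⟨t', l'⟩, m', n'⟩ := b
  simp only [phiE, Prod.mk.injEq] at h ⊢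
  omega

lemma phiO_inj : Function.Injective phiO := by
  intro a b h
  obtain ⟨⟨t, l⟩, m, n⟩ := a
  obtain ⟨⟨t', l'⟩, m', n'⟩ := b
  simp only [phiO, Prod.mk.injEq] at h ⊢
  omega

lemma range_phiE :
    Set.range phiE = {v : W | Even (v.1.1 + v.1.2 + v.2.1 + v.2.2)} := by
  ext ⟨⟨k, l⟩, m, n⟩
  simp only [Set.mem_range, Set.mem_setOf_eq]
  constructor
  · rintro ⟨⟨⟨t, l'⟩, m', n'⟩, h⟩
    simp only [phiE, Prod.mk.injEq] at h
    obtain ⟨⟨h1, h2⟩, h3, h4⟩ := h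
    exact ⟨t, by omega⟩
  · rintro ⟨r, hr⟩
    refine ⟨((r, l), (m, n)), ?_⟩
    simp only [phiE, Prod.mk.injEq, and_true, true_and]
    omega

lemma range_phiO :
    Set.range phiO = {v : W | Odd (v.1.1 + v.1.2 + v.2.1 + v.2.2)} := by
  ext ⟨⟨k, l⟩, m, n⟩
  simp only [Set.mem_range, Set.mem_setOf_eq]
  constructor
  · rintro ⟨⟨⟨t, l'⟩, m', n'⟩, h⟩
    simp only [phiO, Prod.mk.injEq] at h
    obtain ⟨⟨h1, h2⟩, h3, h4⟩ := h
    exact ⟨t, by omega⟩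
  · rintro ⟨r, hr⟩
    refine ⟨((r, l), (m, n)), ?_⟩
    simp only [phiO, Prod.mk.injEq, and_true, true_and]
    omega

lemma range_phiO_compl : (Set.range phiE)ᶜ = Set.range phiO := by
  rw [range_phiE, range_phiO]
  ext v
  simp [Int.not_even_iff_odd]

lemma tsum_split (F : W → ℂ) (hF : Summable F) :
    ∑' v : W, F v = (∑' u : W, F (phiE u)) + ∑' u : W, F (phiO u) := by
  have hE : ∑' u : W, F (phiE u) = ∑' v : (Set.range phiE), F v :=
    (Equiv.ofInjective phiE phiE_inj).tsum_eq (fun v : Set.range phiE => F v)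
  have hO : ∑' u : W, F (phiO u) = ∑' v : (Set.range phiO), F v :=
    (Equiv.ofInjective phiO phiO_inj).tsum_eq (fun v : Set.range phiO => F v)
  rw [hE, hO, ← range_phiO_compl]
  exact (Summable.tsum_add_tsum_compl (hF.subtype _) (hF.subtype _)).symm

/-! ### Exponential helpers -/

lemma exp_eq_exp (a b : ℂ) (m : ℤ) (h : a = b + (m : ℂ) * (2 * Real.pi * Complex.I)) :
    Complex.exp a = Complex.exp b := by
  rw [h, Complex.exp_add, Complex.exp_int_mul_two_pi_mul_I, mul_one]

lemma exp_eq_neg_exp (a b : ℂ) (m : ℤ)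
    (h : a = b + (m : ℂ) * (2 * Real.pi * Complex.I) + Real.pi * Complex.I) :
    Complex.exp a = -Complex.exp b := by
  rw [h, Complex.exp_add, Complex.exp_add, Complex.exp_int_mul_two_pi_mul_I, mul_one,
    Complex.exp_pi_mul_I, mul_neg_one]

/-! ### Pointwise comparisons -/

lemma e41 (τ x y z : ℂ) (u : W) :
    G τ (0 + 1/2) (x + 1/2) (y + 1/2) (z + 1/2) 0 (phiE u) = G τ 0 x y z 0 (phiE u) := by
  obtain ⟨⟨t, l⟩, m, n⟩ := u
  simp only [G, phiE]
  refine exp_eq_exp _ _ t ?_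
  push_cast
  ring

lemma e42 (τ x y z : ℂ) (u : W) :
    G τ (0 + 1/2) (x + 1/2) (y + 1/2) (z + 1/2) 0 (phiO u) = -G τ 0 x y z 0 (phiO u) := by
  obtain ⟨⟨t, l⟩, m, n⟩ := u
  simp only [G, phiO]
  refine exp_eq_neg_exp _ _ t ?_
  push_cast
  ring

lemma e2 (τ x y z : ℂ) (u : W) :
    G τ 0 x y z (1/2) (phiE (thetaW u)) = G τ 0 x y z (1/2) (phiO u) := by
  obtain ⟨⟨t, l⟩, m, n⟩ := u
  simp only [G, phiE, phiO, thetaW, Equiv.coe_fn_mk]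
  refine exp_eq_exp _ _ 0 ?_
  push_cast
  ring

lemma e11 (τ x y z : ℂ) (u : W) :
    G τ ((x+y+z)/2 + 1/2) ((x-y+z)/2 + 1/2) ((x+y-z)/2 + 1/2) ((x-y-z)/2 + 1/2) (1/2)
      (phiE u) = G τ 0 x y z 0 (phiO (sigmaW u)) := by
  obtain ⟨⟨t, l⟩, m, n⟩ := u
  simp only [G, phiE, phiO, sigmaW, Equiv.coe_fn_mk]
  refine exp_eq_exp _ _ (t + 1) ?_
  push_cast
  ring

lemma e12 (τ x y z : ℂ) (u : W) :
    G τ ((x+y+z)/2 + 1/2) ((x-y+z)/2 + 1/2) ((x+y-z)/2 + 1/2) ((x-y-z)/2 + 1/2) (1/2)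
      (phiO u) = -G τ 0 x y z (1/2) (phiO (sigmaW u)) := by
  obtain ⟨⟨t, l⟩, m, n⟩ := u
  simp only [G, phiO, sigmaW, Equiv.coe_fn_mk]
  refine exp_eq_neg_exp _ _ (t + 1) ?_
  push_cast
  ring

end QuarticAux

open QuarticAux

set_option maxHeartbeats 1000000 in
theorem quartic_theta_identity (τ : ℂ) (hτ : 0 < τ.im) (x y z : ℂ) :
    - theta2 τ 0 * theta2 τ x * theta2 τ y * theta2 τ z
    + theta3 τ 0 * theta3 τ x * theta3 τ y * theta3 τ z
    - theta4 τ 0 * theta4 τ x * theta4 τ y * theta4 τ z =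
      2 * theta1 τ ((x+y+z)/2) * theta1 τ ((x-y+z)/2) *
        theta1 τ ((x+y-z)/2) * theta1 τ ((x-y-z)/2) := by
  have ht1 : ∀ ζ : ℂ, theta1 τ ζ = ∑' k : ℤ, E τ (ζ + 1/2) (1/2) k := fun ζ =>
    tsum_congr fun k => by rw [E]
  have ht2 : ∀ ζ : ℂ, theta2 τ ζ = ∑' k : ℤ, E τ ζ (1/2) k := fun ζ =>
    tsum_congr fun k => by rw [E]
  have ht3 : ∀ ζ : ℂ, theta3 τ ζ = ∑' k : ℤ, E τ ζ 0 k := fun ζ =>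
    tsum_congr fun k => by rw [E]; congr 1; ring
  have ht4 : ∀ ζ : ℂ, theta4 τ ζ = ∑' k : ℤ, E τ (ζ + 1/2) 0 k := fun ζ =>
    tsum_congr fun k => by rw [E]; congr 1; ring
  have P2 : theta2 τ 0 * theta2 τ x * theta2 τ y * theta2 τ z
      = ∑' v : W, G τ 0 x y z (1/2) v := by
    rw [ht2, ht2, ht2, ht2]; exact prod_theta τ hτ 0 x y z (1/2)
  have P3 : theta3 τ 0 * theta3 τ x * theta3 τ y * theta3 τ z
      = ∑' v : W, G τ 0 x y z 0 v := by
    rw [ht3, ht3, ht3, ht3]; exact prod_theta τ hτ 0 x y z 0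
  have P4 : theta4 τ 0 * theta4 τ x * theta4 τ y * theta4 τ z
      = ∑' v : W, G τ (0 + 1/2) (x + 1/2) (y + 1/2) (z + 1/2) 0 v := by
    rw [ht4, ht4, ht4, ht4]; exact prod_theta τ hτ _ _ _ _ 0
  have P1 : theta1 τ ((x+y+z)/2) * theta1 τ ((x-y+z)/2) *
        theta1 τ ((x+y-z)/2) * theta1 τ ((x-y-z)/2)
      = ∑' v : W, G τ ((x+y+z)/2 + 1/2) ((x-y+z)/2 + 1/2) ((x+y-z)/2 + 1/2)
          ((x-y-z)/2 + 1/2) (1/2) v := by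
    rw [ht1, ht1, ht1, ht1]; exact prod_theta τ hτ _ _ _ _ (1/2)
  have S2 := tsum_split (G τ 0 x y z (1/2)) (summable_G τ hτ _ _ _ _ _)
  have S3 := tsum_split (G τ 0 x y z 0) (summable_G τ hτ _ _ _ _ _)
  have S4 := tsum_split (G τ (0 + 1/2) (x + 1/2) (y + 1/2) (z + 1/2) 0)
    (summable_G τ hτ _ _ _ _ _)
  have S1 := tsum_split (G τ ((x+y+z)/2 + 1/2) ((x-y+z)/2 + 1/2) ((x+y-z)/2 + 1/2)
    ((x-y-z)/2 + 1/2) (1/2)) (summable_G τ hτ _ _ _ _ _)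
  have T41 : (∑' u : W, G τ (0 + 1/2) (x + 1/2) (y + 1/2) (z + 1/2) 0 (phiE u))
      = ∑' u : W, G τ 0 x y z 0 (phiE u) := tsum_congr (e41 τ x y z)
  have T42 : (∑' u : W, G τ (0 + 1/2) (x + 1/2) (y + 1/2) (z + 1/2) 0 (phiO u))
      = -∑' u : W, G τ 0 x y z 0 (phiO u) := by
    rw [tsum_congr (e42 τ x y z), tsum_neg]
  have T2 : (∑' u : W, G τ 0 x y z (1/2) (phiE u))
      = ∑' u : W, G τ 0 x y z (1/2) (phiO u) := by
    rw [← thetaW.tsum_eq (fun u => G τ 0 x y z (1/2) (phiE u))]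
    exact tsum_congr (e2 τ x y z)
  have T11 : (∑' u : W, G τ ((x+y+z)/2 + 1/2) ((x-y+z)/2 + 1/2) ((x+y-z)/2 + 1/2)
        ((x-y-z)/2 + 1/2) (1/2) (phiE u))
      = ∑' u : W, G τ 0 x y z 0 (phiO u) := by
    rw [tsum_congr (e11 τ x y z)]
    exact sigmaW.tsum_eq (fun u => G τ 0 x y z 0 (phiO u))
  have T12 : (∑' u : W, G τ ((x+y+z)/2 + 1/2) ((x-y+z)/2 + 1/2) ((x+y-z)/2 + 1/2)
        ((x-y-z)/2 + 1/2) (1/2) (phiO u))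
      = -∑' u : W, G τ 0 x y z (1/2) (phiO u) := by
    rw [tsum_congr (e12 τ x y z), tsum_neg]
    congr 1
    exact sigmaW.tsum_eq (fun u => G τ 0 x y z (1/2) (phiO u))
  rw [neg_mul, neg_mul, neg_mul, P2, P3, P4,
    show 2 * theta1 τ ((x+y+z)/2) * theta1 τ ((x-y+z)/2) *
        theta1 τ ((x+y-z)/2) * theta1 τ ((x-y-z)/2)
      = 2 * (theta1 τ ((x+y+z)/2) * theta1 τ ((x-y+z)/2) *
        theta1 τ ((x+y-z)/2) * theta1 τ ((x-y-z)/2)) from by ring, P1,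
    S2, S3, S4, S1, T41, T42, T2, T11, T12]
  ring
end

section
/- For α ∈ {1,2,3} with (α, β, γ) a cyclic permutation of (1,2,3), and for all complex ζ and x where the denominators are nonzero: b_α(ζ−x) − b_α(ζ+x) = 2·θ_{α+1}(2x)·θ_{β+1}(2ζ)·θ_{γ+1}(2ζ)·θ₁(2x) / (θ_{β+1}(0)·θ_{γ+1}(0)·θ₁(2ζ−2x)·θ₁(2ζ+2x)), where b_α(ζ) = θ_{α+1}(2ζ)/θ₁(2ζ). -/
open Complex

/-- `th a τ z = θ_a(z|τ)` for `a = 1,2,3,4`. -/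
noncomputable def th : ℕ → ℂ → ℂ → ℂ
  | 1 => theta1
  | 2 => theta2
  | 3 => theta3
  | _ => theta4

namespace ThetaAux

open Real

/-- General theta-type series with characteristic `a` (the `b`-shift is absorbed into `z`). -/
noncomputable def ttm (σ a z : ℂ) (k : ℤ) : ℂ := cexp (π*I*σ*(k+a)^2 + 2*π*I*z*(k+a))

noncomputable def TT (σ a z : ℂ) : ℂ := ∑' k : ℤ, ttm σ a z k

lemma ttm_eq (σ a z : ℂ) (k : ℤ) :
    ttm σ a z k = cexp (π*I*σ*a^2 + 2*π*I*z*a) * jacobiTheta₂_term k (z + a*σ) σ := by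
  rw [ttm, jacobiTheta₂_term, ← Complex.exp_add]; congr 1; ring

lemma summable_norm_ttm {σ : ℂ} (hσ : 0 < σ.im) (a z : ℂ) :
    Summable fun k : ℤ => ‖ttm σ a z k‖ := by
  simp_rw [ttm_eq, norm_mul]
  apply Summable.mul_left
  refine (summable_pow_mul_jacobiTheta₂_term_bound |(z + a*σ).im| hσ 0).of_nonneg_of_le
    (fun _ => norm_nonneg _) (fun n => ?_)
  simpa only [pow_zero, one_mul] using norm_jacobiTheta₂_term_le hσ le_rfl le_rfl n

lemma TT_add_one (σ a z : ℂ) : TT σ (a+1) z = TT σ a z := by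
  rw [TT, TT, ← (Equiv.addRight (1:ℤ)).tsum_eq (ttm σ a z)]
  refine tsum_congr fun k => ?_
  simp only [ttm, Equiv.coe_addRight]
  congr 1
  push_cast
  ring

lemma TT_neg (σ a z : ℂ) : TT σ (-a) (-z) = TT σ a z := by
  rw [TT, TT, ← (Equiv.neg ℤ).tsum_eq (ttm σ a z)]
  refine tsum_congr fun k => ?_
  simp only [ttm, Equiv.neg_apply]
  congr 1
  push_cast
  ring

lemma TT_shift (σ a z : ℂ) : TT σ a (z+1) = cexp (2*π*I*a) * TT σ a z := by
  rw [TT, TT, ← tsum_mul_left]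
  refine tsum_congr fun k => ?_
  rw [ttm, ttm, show π*I*σ*(k+a)^2 + 2*π*I*(z+1)*(k+a)
      = (2*π*I*a + (π*I*σ*(k+a)^2 + 2*π*I*z*(k+a))) + k*(2*π*I) by ring,
    Complex.exp_add, Complex.exp_int_mul_two_pi_mul_I, mul_one, Complex.exp_add]

lemma TT_half_half (σ : ℂ) : TT σ (1/2) (1/2) = 0 := by
  have h : ∀ k : ℤ, ttm σ (1/2) (1/2) ((Equiv.subLeft (-1 : ℤ)) k) = - ttm σ (1/2) (1/2) k := by
    intro k
    simp only [ttm, Equiv.subLeft_apply]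
    rw [show π*I*σ*(((-1 - k : ℤ) : ℂ)+1/2)^2 + 2*π*I*(1/2)*(((-1 - k : ℤ) : ℂ)+1/2)
      = ((π*I*σ*((k:ℂ)+1/2)^2 + 2*π*I*(1/2)*((k:ℂ)+1/2)) + π*I) + (-1-k)*(2*π*I) by
        push_cast; ring,
      Complex.exp_add]
    rw [show ((-1-k:ℂ)) = ((-1-k : ℤ):ℂ) by push_cast; ring]
    rw [Complex.exp_int_mul_two_pi_mul_I, mul_one, Complex.exp_add, Complex.exp_pi_mul_I]
    ring
  have h2 : TT σ (1/2) (1/2) = - TT σ (1/2) (1/2) := by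
    conv_lhs => rw [TT, ← (Equiv.subLeft (-1 : ℤ)).tsum_eq (ttm σ (1/2) (1/2))]
    rw [tsum_congr h, tsum_neg, TT]
  linear_combination h2 / 2

def sEven : Set (ℤ × ℤ) := {p | (p.1 + p.2) % 2 = 0}

def eEven : (ℤ × ℤ) ≃ sEven where
  toFun p := ⟨(p.1 + p.2, p.1 - p.2), by simp only [sEven, Set.mem_setOf_eq]; omega⟩
  invFun q := ((q.1.1 + q.1.2)/2, (q.1.1 - q.1.2)/2)
  left_inv p := by obtain ⟨j, k⟩ := p; simp only; exact Prod.ext (by omega) (by omega)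
  right_inv q := by
    obtain ⟨⟨m, n⟩, h⟩ := q
    simp only [sEven, Set.mem_setOf_eq] at h
    apply Subtype.ext
    simp only
    exact Prod.ext (by omega) (by omega)

def eOdd : (ℤ × ℤ) ≃ (sEvenᶜ : Set (ℤ × ℤ)) where
  toFun p := ⟨(p.1 + p.2 + 1, p.1 - p.2), by
    simp only [sEven, Set.mem_compl_iff, Set.mem_setOf_eq]; omega⟩
  invFun q := ((q.1.1 + q.1.2 - 1)/2, (q.1.1 - q.1.2 - 1)/2)
  left_inv p := by obtain ⟨j, k⟩ := p; simp only; exact Prod.ext (by omega) (by omega)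
  right_inv q := by
    obtain ⟨⟨m, n⟩, h⟩ := q
    simp only [sEven, Set.mem_compl_iff, Set.mem_setOf_eq] at h
    apply Subtype.ext
    simp only
    exact Prod.ext (by omega) (by omega)

theorem TT_mul_TT {τ : ℂ} (hτ : 0 < τ.im) (a a' x y : ℂ) :
    TT τ a x * TT τ a' y =
      TT (2*τ) ((a+a')/2) (x+y) * TT (2*τ) ((a-a')/2) (x-y) +
      TT (2*τ) ((a+a')/2 + 1/2) (x+y) * TT (2*τ) ((a-a')/2 + 1/2) (x-y) := by
  have h2τ : 0 < ((2:ℂ)*τ).im := by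
    rw [Complex.mul_im]; norm_num; linarith
  have hf := summable_norm_ttm hτ a x
  have hg := summable_norm_ttm hτ a' y
  set F : ℤ × ℤ → ℂ := fun p => ttm τ a x p.1 * ttm τ a' y p.2 with hF
  have hFsum : Summable F := summable_mul_of_summable_norm hf hg
  have keyE : ∀ p : ℤ × ℤ, F (eEven p) =
      ttm (2*τ) ((a+a')/2) (x+y) p.1 * ttm (2*τ) ((a-a')/2) (x-y) p.2 := by
    rintro ⟨j, k⟩
    simp only [hF, eEven, Equiv.coe_fn_mk, ttm]
    rw [← Complex.exp_add, ← Complex.exp_add]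
    congr 1
    push_cast
    ring
  have keyO : ∀ p : ℤ × ℤ, F (eOdd p) =
      ttm (2*τ) ((a+a')/2 + 1/2) (x+y) p.1 * ttm (2*τ) ((a-a')/2 + 1/2) (x-y) p.2 := by
    rintro ⟨j, k⟩
    simp only [hF, eOdd, Equiv.coe_fn_mk, ttm]
    rw [← Complex.exp_add, ← Complex.exp_add]
    congr 1
    push_cast
    ring
  calc TT τ a x * TT τ a' y
      = ∑' p : ℤ × ℤ, F p := tsum_mul_tsum_of_summable_norm hf hg
    _ = (∑' q : sEven, F q) + (∑' q : (sEvenᶜ : Set (ℤ × ℤ)), F q) :=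
        (Summable.tsum_add_tsum_compl (hFsum.subtype _) (hFsum.subtype _)).symm
    _ = (∑' p : ℤ × ℤ, F (eEven p)) + (∑' p : ℤ × ℤ, F (eOdd p)) := by
        rw [eEven.tsum_eq fun q : sEven => F q,
          eOdd.tsum_eq fun q : (sEvenᶜ : Set (ℤ×ℤ)) => F q]
    _ = _ := by
        rw [tsum_congr keyE, tsum_congr keyO,
          ← tsum_mul_tsum_of_summable_norm (summable_norm_ttm h2τ _ _)
            (summable_norm_ttm h2τ _ _),
          ← tsum_mul_tsum_of_summable_norm (summable_norm_ttm h2τ _ _)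
            (summable_norm_ttm h2τ _ _)]
        rfl

lemma exp_half_pi_I : cexp (π*I/2) = I := by
  rw [show ((π:ℂ)*I/2) = ((π/2:ℝ):ℂ)*I by push_cast; ring, Complex.exp_mul_I,
    ← Complex.ofReal_cos, ← Complex.ofReal_sin, Real.cos_pi_div_two, Real.sin_pi_div_two]
  simp

lemma TT_one (σ w : ℂ) : TT σ 1 w = TT σ 0 w := by
  simpa using TT_add_one σ 0 w

lemma TT_negq_char (σ w : ℂ) : TT σ (-(1/4)) w = TT σ (3/4) w := by
  have := TT_add_one σ (-(1/4)) w; norm_num at this; rw [← this]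

lemma TT_neg0 (σ w : ℂ) : TT σ 0 (-w) = TT σ 0 w := by
  simpa using TT_neg σ 0 w

lemma TT_negh (σ w : ℂ) : TT σ (1/2) (-w) = TT σ (1/2) w := by
  have h := TT_neg σ (-(1/2)) w
  have h2 := TT_add_one σ (-(1/2)) w
  norm_num at h h2
  rw [h, ← h2]

lemma TT_negq (σ w : ℂ) : TT σ (1/4) (-w) = TT σ (3/4) w := by
  have h := TT_neg σ (-(1/4)) w
  have h2 := TT_add_one σ (-(1/4)) w
  norm_num at h h2
  rw [h, ← h2]

lemma TT_negq3 (σ w : ℂ) : TT σ (3/4) (-w) = TT σ (1/4) w := by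
  have h := TT_neg σ (-(3/4)) w
  have h2 := TT_add_one σ (-(3/4)) w
  norm_num at h h2
  rw [h, ← h2]

lemma TT_shift0 (σ w : ℂ) : TT σ 0 (w+1) = TT σ 0 w := by
  simpa using TT_shift σ 0 w

lemma TT_shifth (σ w : ℂ) : TT σ (1/2) (w+1) = - TT σ (1/2) w := by
  rw [TT_shift, show (2*(π:ℂ)*I*(1/2)) = (π:ℂ)*I by ring, Complex.exp_pi_mul_I]
  ring

lemma TT_shiftq (σ w : ℂ) : TT σ (1/4) (w+1) = I * TT σ (1/4) w := by
  rw [TT_shift, show (2*(π:ℂ)*I*(1/4)) = (π:ℂ)*I/2 by ring, exp_half_pi_I]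

lemma TT_shiftq3 (σ w : ℂ) : TT σ (3/4) (w+1) = -I * TT σ (3/4) w := by
  rw [TT_shift, show (2*(π:ℂ)*I*(3/4)) = (π:ℂ)*I + (π:ℂ)*I/2 by ring, Complex.exp_add,
    Complex.exp_pi_mul_I, exp_half_pi_I]
  ring

lemma TT_q3_zero (σ : ℂ) : TT σ (3/4) 0 = TT σ (1/4) 0 := by
  have := TT_negq σ 0; rw [neg_zero] at this; exact this.symm

variable {τ : ℂ}

lemma mul_hh (hτ : 0 < τ.im) (x y : ℂ) :
    TT τ (1/2) x * TT τ (1/2) y =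
      TT (2*τ) (1/2) (x+y) * TT (2*τ) 0 (x-y) + TT (2*τ) 0 (x+y) * TT (2*τ) (1/2) (x-y) := by
  rw [TT_mul_TT hτ]
  norm_num [TT_one]

lemma mul_h0 (hτ : 0 < τ.im) (x y : ℂ) :
    TT τ (1/2) x * TT τ 0 y =
      TT (2*τ) (1/4) (x+y) * TT (2*τ) (1/4) (x-y) +
      TT (2*τ) (3/4) (x+y) * TT (2*τ) (3/4) (x-y) := by
  rw [TT_mul_TT hτ]
  norm_num

lemma mul_0h (hτ : 0 < τ.im) (x y : ℂ) :
    TT τ 0 x * TT τ (1/2) y =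
      TT (2*τ) (1/4) (x+y) * TT (2*τ) (3/4) (x-y) +
      TT (2*τ) (3/4) (x+y) * TT (2*τ) (1/4) (x-y) := by
  rw [TT_mul_TT hτ]
  norm_num [TT_negq_char]

lemma mul_00 (hτ : 0 < τ.im) (x y : ℂ) :
    TT τ 0 x * TT τ 0 y =
      TT (2*τ) 0 (x+y) * TT (2*τ) 0 (x-y) +
      TT (2*τ) (1/2) (x+y) * TT (2*τ) (1/2) (x-y) := by
  rw [TT_mul_TT hτ]
  norm_num

/-- bridges -/
lemma theta1_eq (τ z : ℂ) : theta1 τ z = TT τ (1/2) (z + 1/2) := rfl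
lemma theta2_eq (τ z : ℂ) : theta2 τ z = TT τ (1/2) z := rfl
lemma theta3_eq (τ z : ℂ) : theta3 τ z = TT τ 0 z := by
  refine tsum_congr fun k => ?_
  simp only [ttm]
  congr 1
  ring
lemma theta4_eq (τ z : ℂ) : theta4 τ z = TT τ 0 (z + 1/2) := by
  refine tsum_congr fun k => ?_
  simp only [ttm]
  congr 1
  ring

/-- Case α = 1 quartic identity. -/
lemma Q1 (hτ : 0 < τ.im) (u v : ℂ) :
    (theta2 τ (u-v) * theta1 τ (u+v) - theta2 τ (u+v) * theta1 τ (u-v)) *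
      (theta3 τ 0 * theta4 τ 0) =
    2 * (theta2 τ v * theta1 τ v) * (theta3 τ u * theta4 τ u) := by
  simp only [theta1_eq, theta2_eq, theta3_eq, theta4_eq]
  have p1 : TT τ (1/2) (u-v) * TT τ (1/2) (u+v+1/2) =
      TT (2*τ) (1/2) (2*u+1/2) * TT (2*τ) 0 (2*v+1/2) +
      TT (2*τ) 0 (2*u+1/2) * TT (2*τ) (1/2) (2*v+1/2) := by
    rw [mul_hh hτ, show (u-v+(u+v+1/2) : ℂ) = 2*u+1/2 by ring,
      show (u-v-(u+v+1/2) : ℂ) = -(2*v+1/2) by ring, TT_neg0, TT_negh]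
  have p2 : TT τ (1/2) (u+v) * TT τ (1/2) (u-v+1/2) =
      TT (2*τ) (1/2) (2*u+1/2) * TT (2*τ) 0 (2*v+1/2) -
      TT (2*τ) 0 (2*u+1/2) * TT (2*τ) (1/2) (2*v+1/2) := by
    rw [mul_hh hτ, show (u+v+(u-v+1/2) : ℂ) = 2*u+1/2 by ring,
      show (u+v-(u-v+1/2) : ℂ) = 2*v-1/2 by ring]
    have e0 := TT_shift0 (2*τ) (2*v-1/2)
    have eh := TT_shifth (2*τ) (2*v-1/2)
    rw [show (2*v-1/2+1 : ℂ) = 2*v+1/2 by ring] at e0 eh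
    rw [← e0, eh]
    ring
  have p3 : TT τ 0 u * TT τ 0 (u+1/2) =
      TT (2*τ) 0 (2*u+1/2) * TT (2*τ) 0 (1/2) := by
    rw [mul_00 hτ, show (u+(u+1/2) : ℂ) = 2*u+1/2 by ring,
      show (u-(u+1/2) : ℂ) = -(1/2) by ring, TT_neg0, TT_negh, TT_half_half]
    ring
  have p4 : TT τ (1/2) v * TT τ (1/2) (v+1/2) =
      TT (2*τ) (1/2) (2*v+1/2) * TT (2*τ) 0 (1/2) := by
    rw [mul_hh hτ, show (v+(v+1/2) : ℂ) = 2*v+1/2 by ring,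
      show (v-(v+1/2) : ℂ) = -(1/2) by ring, TT_neg0, TT_negh, TT_half_half]
    ring
  have p5 : TT τ 0 0 * TT τ 0 (0+1/2) =
      TT (2*τ) 0 (1/2) * TT (2*τ) 0 (1/2) := by
    rw [mul_00 hτ, show ((0:ℂ)+(0+1/2) : ℂ) = 1/2 by ring,
      show ((0:ℂ)-(0+1/2) : ℂ) = -(1/2) by ring, TT_neg0, TT_negh, TT_half_half]
    ring
  rw [p1, p2, p3, p4, p5]
  ring

/-- Case α = 2 quartic identity. -/
lemma Q2 (hτ : 0 < τ.im) (u v : ℂ) :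
    (theta3 τ (u-v) * theta1 τ (u+v) - theta3 τ (u+v) * theta1 τ (u-v)) *
      (theta4 τ 0 * theta2 τ 0) =
    2 * (theta3 τ v * theta1 τ v) * (theta4 τ u * theta2 τ u) := by
  simp only [theta1_eq, theta2_eq, theta3_eq, theta4_eq]
  have hq : TT (2*τ) (1/4) (-(1/2) : ℂ) = -I * TT (2*τ) (1/4) (1/2) := by
    have := TT_shiftq (2*τ) (-(1/2))
    rw [show ((-(1/2):ℂ)+1) = 1/2 by ring] at this
    rw [this]; linear_combination (TT (2*τ) (1/4) (-(1/2))) * Complex.I_sq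
  have r1 : TT τ 0 (u-v) * TT τ (1/2) (u+v+1/2) =
      TT (2*τ) (1/4) (2*u+1/2) * TT (2*τ) (1/4) (2*v+1/2) +
      TT (2*τ) (3/4) (2*u+1/2) * TT (2*τ) (3/4) (2*v+1/2) := by
    rw [mul_0h hτ, show (u-v+(u+v+1/2) : ℂ) = 2*u+1/2 by ring,
      show (u-v-(u+v+1/2) : ℂ) = -(2*v+1/2) by ring, TT_negq3, TT_negq]
  have r2 : TT τ 0 (u+v) * TT τ (1/2) (u-v+1/2) =
      I * (TT (2*τ) (1/4) (2*u+1/2) * TT (2*τ) (3/4) (2*v+1/2)) -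
      I * (TT (2*τ) (3/4) (2*u+1/2) * TT (2*τ) (1/4) (2*v+1/2)) := by
    rw [mul_0h hτ, show (u+v+(u-v+1/2) : ℂ) = 2*u+1/2 by ring,
      show (u+v-(u-v+1/2) : ℂ) = 2*v-1/2 by ring]
    have e3 := TT_shiftq3 (2*τ) (2*v-1/2)
    have e1 := TT_shiftq (2*τ) (2*v-1/2)
    rw [show (2*v-1/2+1 : ℂ) = 2*v+1/2 by ring] at e3 e1
    rw [e3, e1]
    linear_combination (TT (2*τ) (1/4) (2*u+1/2) * TT (2*τ) (3/4) (2*v-1/2)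
      + TT (2*τ) (3/4) (2*u+1/2) * TT (2*τ) (1/4) (2*v-1/2)) * Complex.I_sq
  have r3 : TT τ 0 (u+1/2) * TT τ (1/2) u =
      -I * (TT (2*τ) (1/4) (2*u+1/2) * TT (2*τ) (1/4) (1/2)) +
      TT (2*τ) (3/4) (2*u+1/2) * TT (2*τ) (1/4) (1/2) := by
    rw [mul_0h hτ, show (u+1/2+u : ℂ) = 2*u+1/2 by ring,
      show (u+1/2-u : ℂ) = 1/2 by ring]
    rw [show TT (2*τ) (3/4) (1/2 : ℂ) = TT (2*τ) (1/4) (-(1/2)) from (TT_negq (2*τ) (1/2)).symm,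
      hq]
    ring
  have r4 : TT τ 0 v * TT τ (1/2) (v+1/2) =
      TT (2*τ) (1/4) (2*v+1/2) * TT (2*τ) (1/4) (1/2) -
      I * (TT (2*τ) (3/4) (2*v+1/2) * TT (2*τ) (1/4) (1/2)) := by
    rw [mul_0h hτ, show (v+(v+1/2) : ℂ) = 2*v+1/2 by ring,
      show (v-(v+1/2) : ℂ) = -(1/2) by ring, TT_negq3, hq]
    ring
  have r5 : TT τ 0 (0+1/2) * TT τ (1/2) 0 =
      -(2*I) * (TT (2*τ) (1/4) (1/2) * TT (2*τ) (1/4) (1/2)) := by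
    rw [mul_0h hτ, show ((0:ℂ)+1/2+0 : ℂ) = 1/2 by ring,
      show ((0:ℂ)+1/2-0 : ℂ) = 1/2 by ring]
    rw [show TT (2*τ) (3/4) (1/2 : ℂ) = TT (2*τ) (1/4) (-(1/2)) from (TT_negq (2*τ) (1/2)).symm,
      hq]
    ring
  rw [r1, r2, r3, r4, r5]
  linear_combination (-2 * TT (2*τ) (3/4) (2*u+1/2) * TT (2*τ) (1/4) (2*v+1/2)
    * TT (2*τ) (1/4) (1/2)^2) * Complex.I_sq

/-- Case α = 3 quartic identity. -/
lemma Q3 (hτ : 0 < τ.im) (u v : ℂ) :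
    (theta4 τ (u-v) * theta1 τ (u+v) - theta4 τ (u+v) * theta1 τ (u-v)) *
      (theta2 τ 0 * theta3 τ 0) =
    2 * (theta4 τ v * theta1 τ v) * (theta2 τ u * theta3 τ u) := by
  simp only [theta1_eq, theta2_eq, theta3_eq, theta4_eq]
  have q1 : TT τ 0 (u-v+1/2) * TT τ (1/2) (u+v+1/2) =
      I * (TT (2*τ) (1/4) (2*u) * TT (2*τ) (1/4) (2*v)) -
      I * (TT (2*τ) (3/4) (2*u) * TT (2*τ) (3/4) (2*v)) := by
    rw [mul_0h hτ, show (u-v+1/2+(u+v+1/2) : ℂ) = 2*u+1 by ring,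
      show (u-v+1/2-(u+v+1/2) : ℂ) = -(2*v) by ring, TT_negq3, TT_negq,
      TT_shiftq, TT_shiftq3]
    ring
  have q2 : TT τ 0 (u+v+1/2) * TT τ (1/2) (u-v+1/2) =
      I * (TT (2*τ) (1/4) (2*u) * TT (2*τ) (3/4) (2*v)) -
      I * (TT (2*τ) (3/4) (2*u) * TT (2*τ) (1/4) (2*v)) := by
    rw [mul_0h hτ, show (u+v+1/2+(u-v+1/2) : ℂ) = 2*u+1 by ring,
      show (u+v+1/2-(u-v+1/2) : ℂ) = 2*v by ring, TT_shiftq, TT_shiftq3]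
    have h3 : TT (2*τ) (-(1/4)) (2*v) = TT (2*τ) (3/4) (2*v) := TT_negq_char _ _
    ring
  have q3 : TT τ (1/2) u * TT τ 0 u =
      TT (2*τ) (1/4) (2*u) * TT (2*τ) (1/4) 0 +
      TT (2*τ) (3/4) (2*u) * TT (2*τ) (1/4) 0 := by
    rw [mul_h0 hτ, show (u+u : ℂ) = 2*u by ring, sub_self, TT_q3_zero]
  have q4 : TT τ 0 (v+1/2) * TT τ (1/2) (v+1/2) =
      I * (TT (2*τ) (1/4) (2*v) * TT (2*τ) (1/4) 0) -
      I * (TT (2*τ) (3/4) (2*v) * TT (2*τ) (1/4) 0) := by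
    rw [mul_0h hτ, show (v+1/2+(v+1/2) : ℂ) = 2*v+1 by ring, sub_self,
      TT_shiftq, TT_shiftq3, TT_q3_zero]
    ring
  have q5 : TT τ (1/2) 0 * TT τ 0 0 =
      2 * (TT (2*τ) (1/4) 0 * TT (2*τ) (1/4) 0) := by
    rw [mul_h0 hτ, show ((0:ℂ)+0 : ℂ) = 0 by ring, sub_self, TT_q3_zero]
    ring
  rw [q1, q2, q3, q4, q5]
  ring

end ThetaAux

theorem b_difference_identity (τ : ℂ) (hτ : 0 < τ.im) (α β γ : ℕ)
    (hcyc : (α, β, γ) = (1, 2, 3) ∨ (α, β, γ) = (2, 3, 1) ∨ (α, β, γ) = (3, 1, 2))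
    (ζ x : ℂ)
    (h1 : theta1 τ (2*(ζ-x)) ≠ 0) (h2 : theta1 τ (2*(ζ+x)) ≠ 0)
    (h3 : theta1 τ (2*ζ-2*x) ≠ 0) (h4 : theta1 τ (2*ζ+2*x) ≠ 0)
    (h5 : th (β+1) τ 0 ≠ 0) (h6 : th (γ+1) τ 0 ≠ 0) :
    th (α+1) τ (2*(ζ-x)) / theta1 τ (2*(ζ-x)) -
      th (α+1) τ (2*(ζ+x)) / theta1 τ (2*(ζ+x)) =
    2 * th (α+1) τ (2*x) * th (β+1) τ (2*ζ) * th (γ+1) τ (2*ζ) * theta1 τ (2*x) /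
      (th (β+1) τ 0 * th (γ+1) τ 0 * theta1 τ (2*ζ-2*x) * theta1 τ (2*ζ+2*x)) := by
  rw [show (2*(ζ-x) : ℂ) = 2*ζ-2*x by ring, show (2*(ζ+x) : ℂ) = 2*ζ+2*x by ring] at *
  rcases hcyc with h | h | h
  · obtain ⟨rfl, rfl, rfl⟩ : α = 1 ∧ β = 2 ∧ γ = 3 := by
      simpa [Prod.ext_iff] using h
    simp only [show th (1+1) = theta2 from rfl, show th (2+1) = theta3 from rfl,
      show th (3+1) = theta4 from rfl] at *
    rw [div_sub_div _ _ h3 h4, div_eq_div_iff (mul_ne_zero h3 h4)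
      (mul_ne_zero (mul_ne_zero (mul_ne_zero h5 h6) h3) h4)]
    have Q := ThetaAux.Q1 hτ (2*ζ) (2*x)
    rw [show (2*ζ-(2*x) : ℂ) = 2*ζ-2*x by ring, show (2*ζ+(2*x) : ℂ) = 2*ζ+2*x by ring] at Q
    linear_combination (theta1 τ (2*ζ-2*x) * theta1 τ (2*ζ+2*x)) * Q
  · obtain ⟨rfl, rfl, rfl⟩ : α = 2 ∧ β = 3 ∧ γ = 1 := by
      simpa [Prod.ext_iff] using h
    simp only [show th (2+1) = theta3 from rfl, show th (3+1) = theta4 from rfl,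
      show th (1+1) = theta2 from rfl] at *
    rw [div_sub_div _ _ h3 h4, div_eq_div_iff (mul_ne_zero h3 h4)
      (mul_ne_zero (mul_ne_zero (mul_ne_zero h5 h6) h3) h4)]
    have Q := ThetaAux.Q2 hτ (2*ζ) (2*x)
    rw [show (2*ζ-(2*x) : ℂ) = 2*ζ-2*x by ring, show (2*ζ+(2*x) : ℂ) = 2*ζ+2*x by ring] at Q
    linear_combination (theta1 τ (2*ζ-2*x) * theta1 τ (2*ζ+2*x)) * Q
  · obtain ⟨rfl, rfl, rfl⟩ : α = 3 ∧ β = 1 ∧ γ = 2 := by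
      simpa [Prod.ext_iff] using h
    simp only [show th (3+1) = theta4 from rfl, show th (1+1) = theta2 from rfl,
      show th (2+1) = theta3 from rfl] at *
    rw [div_sub_div _ _ h3 h4, div_eq_div_iff (mul_ne_zero h3 h4)
      (mul_ne_zero (mul_ne_zero (mul_ne_zero h5 h6) h3) h4)]
    have Q := ThetaAux.Q3 hτ (2*ζ) (2*x)
    rw [show (2*ζ-(2*x) : ℂ) = 2*ζ-2*x by ring, show (2*ζ+(2*x) : ℂ) = 2*ζ+2*x by ring] at Q
    linear_combination (theta1 τ (2*ζ-2*x) * theta1 τ (2*ζ+2*x)) * Q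
end

section
/- For fixed complex parameters ℓ and η, define c_ℓ(ζ) = θ₁(2ζ − 2ℓη)/θ₁(2ζ) and ρ_ℓ(ζ) = c_ℓ(ζ)·c_ℓ(−ζ−η). Then for all complex ζ and x where denominators are nonzero: ρ_ℓ(ζ) − ρ_ℓ(x) = θ₁(2ℓη)·θ₁(2(ℓ+1)η)·θ₁(2ζ−2x)·θ₁(2ζ+2x+2η) / (θ₁(2x)·θ₁(2x+2η)·θ₁(2ζ)·θ₁(2ζ+2η)). -/
open Complex

/-!
Multiplying the series of `θ₁(a)` and `θ₁(b)` and splitting the double sum over `(m, n) ∈ ℤ²`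
by the parity of `m + n` gives the addition formula
`θ₁(a) θ₁(b) = θ₃(a+b|2τ) θ₂(a-b|2τ) - θ₂(a+b|2τ) θ₃(a-b|2τ) = D(a+b, a-b)`,
where `D = thetaDet τ` is the `2 × 2` determinant of the vectors `v(s) = (θ₃(s|2τ), θ₂(s|2τ))`,
even in each argument.
With `L = (4ℓ+2)η`, `E = 2η` and `P_w = 4w+2η` this turns `ρ_ℓ(w)` into `D(L, P_w) / D(E, P_w)`,
and the identity becomes the Plücker relation
`D(L, P) D(E, Q) - D(L, Q) D(E, P) = D(L, E) D(P, Q)` for four vectors in the plane.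
-/

def Int.prodParityEquiv : (ℤ × ℤ) ⊕ (ℤ × ℤ) ≃ ℤ × ℤ where
  toFun := Sum.elim (fun pq => (pq.1 + pq.2, pq.1 - pq.2)) (fun pq => (pq.1 + pq.2, pq.1 - pq.2 - 1))
  invFun mn :=
    if (mn.1 + mn.2) % 2 = 0 then .inl ((mn.1 + mn.2) / 2, (mn.1 - mn.2) / 2)
    else .inr ((mn.1 + mn.2 + 1) / 2, (mn.1 - mn.2 - 1) / 2)
  left_inv := by
    rintro (⟨p, q⟩ | ⟨p, q⟩)
    · dsimp only [Sum.elim_inl]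
      rw [if_pos (by omega)]; congr 2 <;> omega
    · dsimp only [Sum.elim_inr]
      rw [if_neg (by omega)]; congr 2 <;> omega
  right_inv := by
    rintro ⟨m, n⟩
    dsimp only
    split_ifs <;> refine Prod.ext ?_ ?_ <;> dsimp <;> omega

theorem HasSum.of_parity_sublattices {M : Type*} [AddCommMonoid M] [TopologicalSpace M]
    [ContinuousAdd M] {f : ℤ × ℤ → M} {a b : M}
    (heven : HasSum (fun pq : ℤ × ℤ => f (pq.1 + pq.2, pq.1 - pq.2)) a)
    (hodd : HasSum (fun pq : ℤ × ℤ => f (pq.1 + pq.2, pq.1 - pq.2 - 1)) b) :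
    HasSum f (a + b) :=
  Int.prodParityEquiv.hasSum_iff.mp (HasSum.sum (f := f ∘ Int.prodParityEquiv) heven hodd)

theorem HasSum.mul_of_finiteDimensional {ι ι' R : Type*} [NormedRing R] [NormedAlgebra ℝ R]
    [FiniteDimensional ℝ R] {f : ι → R} {g : ι' → R} {a b : R} (hf : HasSum f a)
    (hg : HasSum g b) : HasSum (fun x : ι × ι' => f x.1 * g x.2) (a * b) :=
  haveI := FiniteDimensional.complete ℝ R
  hf.mul hg (summable_mul_of_summable_norm hf.summable.norm hg.summable.norm)

noncomputable def theta2Term (τ z : ℂ) (k : ℤ) : ℂ :=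
  Complex.exp (Real.pi * Complex.I * τ * (k + 1/2)^2 + 2 * Real.pi * Complex.I * z * (k + 1/2))

noncomputable def theta3Term (τ z : ℂ) (k : ℤ) : ℂ :=
  Complex.exp (Real.pi * Complex.I * τ * k^2 + 2 * Real.pi * Complex.I * z * k)

noncomputable def thetaDet (τ s t : ℂ) : ℂ :=
  theta3 (2 * τ) s * theta2 (2 * τ) t - theta2 (2 * τ) s * theta3 (2 * τ) t

section

variable {τ : ℂ}

theorem theta1_eq_theta2_add_half (z : ℂ) : theta1 τ z = theta2 τ (z + 1/2) := rfl

theorem hasSum_theta3Term (hτ : 0 < τ.im) (z : ℂ) : HasSum (theta3Term τ z) (theta3 τ z) := by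
  refine (((summable_jacobiTheta₂_term_iff z τ).mpr hτ).congr fun k => ?_).hasSum
  rw [jacobiTheta₂_term, theta3Term]
  ring_nf

theorem hasSum_theta2Term (hτ : 0 < τ.im) (z : ℂ) : HasSum (theta2Term τ z) (theta2 τ z) := by
  refine ((((summable_jacobiTheta₂_term_iff (z + τ / 2) τ).mpr hτ).mul_left
    (cexp (Real.pi * I * τ / 4 + Real.pi * I * z))).congr fun k => ?_).hasSum
  rw [jacobiTheta₂_term, theta2Term, ← exp_add]
  ring_nf

theorem theta3_neg (z : ℂ) : theta3 τ (-z) = theta3 τ z := by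
  rw [theta3, theta3, ← (Equiv.neg ℤ).tsum_eq]
  refine tsum_congr fun k => ?_
  simp only [Equiv.neg_apply, Int.cast_neg]
  ring_nf

theorem theta2_neg (z : ℂ) : theta2 τ (-z) = theta2 τ z := by
  rw [theta2, theta2, ← ((Equiv.addRight 1).trans (Equiv.neg ℤ)).tsum_eq]
  refine tsum_congr fun k => ?_
  simp only [Equiv.trans_apply, Equiv.coe_addRight, Equiv.neg_apply]
  push_cast
  ring_nf

theorem theta2Term_mul_theta2Term_of_even (a b : ℂ) (p q : ℤ) :
    theta2Term τ (a + 1/2) (p + q) * theta2Term τ (b + 1/2) (p - q) =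
      -(theta2Term (2 * τ) (a + b) p * theta3Term (2 * τ) (a - b) q) := by
  rw [theta2Term, theta2Term, theta2Term, theta3Term, ← exp_add, ← exp_add,
    ← mul_neg_one, ← exp_pi_mul_I, ← exp_add, exp_eq_exp_iff_exists_int]
  exact ⟨p, by push_cast; ring⟩

theorem theta2Term_mul_theta2Term_of_odd (a b : ℂ) (p q : ℤ) :
    theta2Term τ (a + 1/2) (p + q) * theta2Term τ (b + 1/2) (p - q - 1) =
      theta3Term (2 * τ) (a + b) p * theta2Term (2 * τ) (a - b) q := by
  rw [theta2Term, theta2Term, theta2Term, theta3Term, ← exp_add, ← exp_add,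
    exp_eq_exp_iff_exists_int]
  exact ⟨p, by push_cast; ring⟩

theorem theta1_mul_theta1 (hτ : 0 < τ.im) (a b : ℂ) :
    theta1 τ a * theta1 τ b = thetaDet τ (a + b) (a - b) := by
  have h2τ : 0 < (2 * τ).im := by simpa using hτ
  have hprod := (hasSum_theta2Term hτ (a + 1/2)).mul_of_finiteDimensional
    (hasSum_theta2Term hτ (b + 1/2))
  have heven := ((hasSum_theta2Term h2τ (a + b)).mul_of_finiteDimensional
    (hasSum_theta3Term h2τ (a - b))).neg
  have hodd := (hasSum_theta3Term h2τ (a + b)).mul_of_finiteDimensional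
    (hasSum_theta2Term h2τ (a - b))
  rw [theta1_eq_theta2_add_half, theta1_eq_theta2_add_half, thetaDet,
    hprod.unique (.of_parity_sublattices
      (by simpa only [theta2Term_mul_theta2Term_of_even] using heven)
      (by simpa only [theta2Term_mul_theta2Term_of_odd] using hodd))]
  ring

theorem thetaDet_neg_left (s t : ℂ) : thetaDet τ (-s) t = thetaDet τ s t := by
  rw [thetaDet, thetaDet, theta3_neg, theta2_neg]

theorem thetaDet_neg_right (s t : ℂ) : thetaDet τ s (-t) = thetaDet τ s t := by
  rw [thetaDet, thetaDet, theta3_neg, theta2_neg]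

theorem thetaDet_swap (s t : ℂ) : thetaDet τ t s = -thetaDet τ s t := by
  rw [thetaDet, thetaDet]
  ring

theorem thetaDet_plucker (l e p q : ℂ) :
    thetaDet τ l p * thetaDet τ e q - thetaDet τ l q * thetaDet τ e p =
      thetaDet τ l e * thetaDet τ p q := by
  simp only [thetaDet]
  ring

theorem rho_eq_thetaDet_div {ℓ η : ℂ} (hτ : 0 < τ.im) {c ρ : ℂ → ℂ}
    (hc : ∀ w, c w = theta1 τ (2*w - 2*ℓ*η) / theta1 τ (2*w))
    (hρ : ∀ w, ρ w = c w * c (-w - η)) (w : ℂ) :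
    ρ w = thetaDet τ ((4*ℓ + 2)*η) (4*w + 2*η) / thetaDet τ (2*η) (4*w + 2*η) := by
  have hnum : theta1 τ (2*w - 2*ℓ*η) * theta1 τ (2*(-w - η) - 2*ℓ*η) =
      thetaDet τ ((4*ℓ + 2)*η) (4*w + 2*η) := by
    rw [theta1_mul_theta1 hτ, ← thetaDet_neg_left]; congr 1 <;> ring
  have hden : theta1 τ (2*w) * theta1 τ (2*(-w - η)) = thetaDet τ (2*η) (4*w + 2*η) := by
    rw [theta1_mul_theta1 hτ, ← thetaDet_neg_left]; congr 1 <;> ring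
  rw [hρ, hc, hc, div_mul_div_comm, hnum, hden]

end

theorem rho_difference_identity_general (τ : ℂ) (hτ : 0 < τ.im) (ℓ η ζ x : ℂ)
    (c : ℂ → ℂ) (ρ : ℂ → ℂ)
    (hc : ∀ w, c w = theta1 τ (2*w - 2*ℓ*η) / theta1 τ (2*w))
    (hρ : ∀ w, ρ w = c w * c (-w - η))
    (h1 : theta1 τ (2*ζ) ≠ 0) (h2 : theta1 τ (2*ζ+2*η) ≠ 0)
    (h3 : theta1 τ (2*x) ≠ 0) (h4 : theta1 τ (2*x+2*η) ≠ 0) :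
    ρ ζ - ρ x =
      theta1 τ (2*ℓ*η) * theta1 τ (2*(ℓ+1)*η) * theta1 τ (2*ζ-2*x) *
        theta1 τ (2*ζ+2*x+2*η) /
      (theta1 τ (2*x) * theta1 τ (2*x+2*η) * theta1 τ (2*ζ) * theta1 τ (2*ζ+2*η)) := by
  have hℓ : theta1 τ (2*ℓ*η) * theta1 τ (2*(ℓ+1)*η) = thetaDet τ ((4*ℓ + 2)*η) (2*η) := by
    rw [theta1_mul_theta1 hτ, ← thetaDet_neg_right]; congr 1 <;> ring
  have hζx : theta1 τ (2*ζ-2*x) * theta1 τ (2*ζ+2*x+2*η) =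
      thetaDet τ (4*ζ + 2*η) (4*x + 2*η) := by
    rw [theta1_mul_theta1 hτ, ← thetaDet_neg_right]; congr 1 <;> ring
  have hx : theta1 τ (2*x) * theta1 τ (2*x+2*η) = thetaDet τ (4*x + 2*η) (2*η) := by
    rw [theta1_mul_theta1 hτ, ← thetaDet_neg_right]; congr 1 <;> ring
  have hζ : theta1 τ (2*ζ) * theta1 τ (2*ζ+2*η) = thetaDet τ (4*ζ + 2*η) (2*η) := by
    rw [theta1_mul_theta1 hτ, ← thetaDet_neg_right]; congr 1 <;> ring
  have hx0 : thetaDet τ (2*η) (4*x + 2*η) ≠ 0 := by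
    rw [thetaDet_swap, ← hx]; exact neg_ne_zero.mpr (mul_ne_zero h3 h4)
  have hζ0 : thetaDet τ (2*η) (4*ζ + 2*η) ≠ 0 := by
    rw [thetaDet_swap, ← hζ]; exact neg_ne_zero.mpr (mul_ne_zero h1 h2)
  calc ρ ζ - ρ x
      = thetaDet τ ((4*ℓ + 2)*η) (4*ζ + 2*η) / thetaDet τ (2*η) (4*ζ + 2*η) -
          thetaDet τ ((4*ℓ + 2)*η) (4*x + 2*η) / thetaDet τ (2*η) (4*x + 2*η) := by
        rw [rho_eq_thetaDet_div hτ hc hρ, rho_eq_thetaDet_div hτ hc hρ]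
    _ = thetaDet τ ((4*ℓ + 2)*η) (2*η) * thetaDet τ (4*ζ + 2*η) (4*x + 2*η) /
          (thetaDet τ (4*x + 2*η) (2*η) * thetaDet τ (4*ζ + 2*η) (2*η)) := by
        rw [div_sub_div _ _ hζ0 hx0, mul_comm (thetaDet τ (2*η) _), thetaDet_plucker,
          thetaDet_swap (4*ζ + 2*η) (2*η), thetaDet_swap (4*x + 2*η) (2*η)]
        ring
    _ = _ := by
        rw [mul_assoc (_ * _) (theta1 τ (2*ζ-2*x)), hℓ, hζx,
          mul_assoc (_ * _) (theta1 τ (2*ζ)), hx, hζ]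

theorem rho_difference_identity (τ : ℂ) (hτ : 0 < τ.im) (ℓ η ζ x : ℂ)
    (c : ℂ → ℂ) (ρ : ℂ → ℂ)
    (hc : ∀ w, c w = theta1 τ (2*w - 2*ℓ*η) / theta1 τ (2*w))
    (hρ : ∀ w, ρ w = c w * c (-w - η))
    (h1 : theta1 τ (2*ζ) ≠ 0) (h2 : theta1 τ (2*ζ+2*η) ≠ 0)
    (h3 : theta1 τ (2*x) ≠ 0) (h4 : theta1 τ (2*x+2*η) ≠ 0)
    (h5 : theta1 τ (2*(-ζ-η)) ≠ 0) (h6 : theta1 τ (2*(-x-η)) ≠ 0) :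
    ρ ζ - ρ x =
      theta1 τ (2*ℓ*η) * theta1 τ (2*(ℓ+1)*η) * theta1 τ (2*ζ-2*x) *
        theta1 τ (2*ζ+2*x+2*η) /
      (theta1 τ (2*x) * theta1 τ (2*x+2*η) * theta1 τ (2*ζ) * theta1 τ (2*ζ+2*η)) :=
  rho_difference_identity_general τ hτ ℓ η ζ x c ρ hc hρ h1 h2 h3 h4
end

section
/- The identity Σ_{α=1}^{3} (−1)^α θ_{α+1}(η)² · b_α(x) · b_α(x+η) = θ₁(η)² holds for all complex x and η (where defined), where b_α(x) = θ_{α+1}(2x)/θ₁(2x). -/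
open Complex

/-!
Expand products of four theta functions as sums over `ℤ⁴`. Shifting every argument by `1/2`
multiplies the `k`-th term by `(-1)^(k₁+k₂+k₃+k₄)`, so `θ₃(z₁)⋯θ₃(z₄) - θ₄(z₁)⋯θ₄(z₄)` is twice
the sum over the `k` with odd coordinate sum, and `θ₂(w₁)⋯θ₂(w₄) + θ₁(w₁)⋯θ₁(w₄)` twice the sum
over the `n` with even coordinate sum. With
`M = ½ [[1,-1,-1,1], [-1,1,-1,1], [-1,-1,1,1], [1,1,1,1]]`, a symmetric orthogonal involution,
and `w = M z`, the map `k ↦ M k - (½, ½, ½, ½)` is a bijection between these two sets matching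
the terms one by one (Riemann's theta relation). The point `z = (η, η, 2x, 2x + 2η)` is fixed
by `M`; dividing the relation there by `θ₁(2x) θ₁(2x + 2η)` gives the identity.
-/

open Real

namespace RiemannTheta

noncomputable def thetaTerm (τ z c : ℂ) (k : ℤ) : ℂ :=
  cexp (π * I * τ * (k + c) ^ 2 + 2 * π * I * z * (k + c))

lemma theta1_eq_tsum (τ z : ℂ) : theta1 τ z = ∑' k, thetaTerm τ (z + 1/2) (1/2) k := rfl

lemma theta2_eq_tsum (τ z : ℂ) : theta2 τ z = ∑' k, thetaTerm τ z (1/2) k := rfl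

lemma theta3_eq_tsum (τ z : ℂ) : theta3 τ z = ∑' k, thetaTerm τ z 0 k := by
  simp only [theta3, thetaTerm, add_zero]

lemma theta4_eq_tsum (τ z : ℂ) : theta4 τ z = ∑' k, thetaTerm τ (z + 1/2) 0 k := by
  simp only [theta4, thetaTerm, add_zero]

lemma thetaTerm_eq_mul_jacobiTheta₂_term (τ z c : ℂ) (k : ℤ) :
    thetaTerm τ z c k = cexp (π * I * τ * c ^ 2 + 2 * π * I * z * c) *
      jacobiTheta₂_term k (z + τ * c) τ := by
  rw [thetaTerm, jacobiTheta₂_term, ← Complex.exp_add]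
  ring_nf

lemma summable_norm_thetaTerm {τ : ℂ} (hτ : 0 < τ.im) (z c : ℂ) :
    Summable fun k => ‖thetaTerm τ z c k‖ := by
  simp_rw [thetaTerm_eq_mul_jacobiTheta₂_term, summable_norm_iff]
  exact ((summable_jacobiTheta₂_term_iff _ τ).2 hτ).mul_left _

lemma thetaTerm_add_half (τ z c : ℂ) (k : ℤ) :
    thetaTerm τ (z + 1/2) c k = cexp (π * I * (k + c)) * thetaTerm τ z c k := by
  rw [thetaTerm, thetaTerm, ← Complex.exp_add]
  ring_nf

section

variable {R ι₁ ι₂ ι₃ ι₄ : Type*} [NormedRing R] [CompleteSpace R]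
  {f : ι₁ → R} {g : ι₂ → R} {h : ι₃ → R} {l : ι₄ → R}
  (hf : Summable fun k => ‖f k‖) (hg : Summable fun k => ‖g k‖)
  (hh : Summable fun k => ‖h k‖) (hl : Summable fun k => ‖l k‖)
include hf hg hh hl

lemma summable_mul_mul_mul_of_summable_norm :
    Summable fun k : (ι₁ × ι₂) × (ι₃ × ι₄) => f k.1.1 * g k.1.2 * h k.2.1 * l k.2.2 :=
  (summable_mul_of_summable_norm (hf.mul_norm hg) (hh.mul_norm hl)).congr
    fun _ => (mul_assoc _ _ _).symm

lemma tsum_mul_tsum_mul_tsum_mul_tsum_of_summable_norm :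
    (∑' k, f k) * (∑' k, g k) * (∑' k, h k) * (∑' k, l k) =
      ∑' k : (ι₁ × ι₂) × (ι₃ × ι₄), f k.1.1 * g k.1.2 * h k.2.1 * l k.2.2 := by
  rw [mul_assoc ((∑' k, f k) * _), tsum_mul_tsum_of_summable_norm hf hg,
    tsum_mul_tsum_of_summable_norm hh hl,
    tsum_mul_tsum_of_summable_norm (hf.mul_norm hg) (hh.mul_norm hl)]
  exact tsum_congr fun _ => (mul_assoc _ _ _).symm

end

abbrev Z4 := (ℤ × ℤ) × (ℤ × ℤ)

noncomputable def thetaTerm4 (τ c z₁ z₂ z₃ z₄ : ℂ) (k : Z4) : ℂ :=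
  thetaTerm τ z₁ c k.1.1 * thetaTerm τ z₂ c k.1.2 * thetaTerm τ z₃ c k.2.1 *
    thetaTerm τ z₄ c k.2.2

def coordSum (k : Z4) : ℤ := k.1.1 + k.1.2 + k.2.1 + k.2.2

section

variable {τ : ℂ} (hτ : 0 < τ.im) (c z₁ z₂ z₃ z₄ : ℂ)
include hτ

lemma summable_thetaTerm4 : Summable (thetaTerm4 τ c z₁ z₂ z₃ z₄) :=
  have h := fun z => summable_norm_thetaTerm hτ z c
  summable_mul_mul_mul_of_summable_norm (h z₁) (h z₂) (h z₃) (h z₄)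

lemma tsum_thetaTerm_mul_tsum_mul_tsum_mul_tsum :
    (∑' k, thetaTerm τ z₁ c k) * (∑' k, thetaTerm τ z₂ c k) * (∑' k, thetaTerm τ z₃ c k) *
      (∑' k, thetaTerm τ z₄ c k) = ∑' k, thetaTerm4 τ c z₁ z₂ z₃ z₄ k :=
  have h := fun z => summable_norm_thetaTerm hτ z c
  tsum_mul_tsum_mul_tsum_mul_tsum_of_summable_norm (h z₁) (h z₂) (h z₃) (h z₄)

end

lemma thetaTerm4_add_half (τ c z₁ z₂ z₃ z₄ : ℂ) (k : Z4) :
    thetaTerm4 τ c (z₁ + 1/2) (z₂ + 1/2) (z₃ + 1/2) (z₄ + 1/2) k =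
      cexp (4 * π * I * c) * (-1) ^ coordSum k * thetaTerm4 τ c z₁ z₂ z₃ z₄ k := by
  have hsign : (-1 : ℂ) ^ coordSum k = cexp (π * I * coordSum k) := by
    rw [mul_comm, Complex.exp_int_mul, Complex.exp_pi_mul_I]
  have hfactor : cexp (π * I * (k.1.1 + c)) * cexp (π * I * (k.1.2 + c)) *
      cexp (π * I * (k.2.1 + c)) * cexp (π * I * (k.2.2 + c)) =
        cexp (4 * π * I * c) * (-1) ^ coordSum k := by
    rw [hsign]
    simp only [← Complex.exp_add, coordSum]
    push_cast
    ring_nf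
  simp only [thetaTerm4, thetaTerm_add_half]
  rw [← hfactor]
  ring

def oddParam (p : Z4) : Z4 := ((p.1.1, p.1.2), (p.2.1, 2 * p.2.2 + 1 - p.1.1 - p.1.2 - p.2.1))

def evenParam (p : Z4) : Z4 :=
  ((p.2.2 - p.1.2 - p.2.1, p.2.2 - p.1.1 - p.2.1), (p.2.2 - p.1.1 - p.1.2, p.2.2))

lemma oddParam_injective : Function.Injective oddParam := by
  rintro ⟨⟨a, b⟩, c, d⟩ ⟨⟨a', b'⟩, c', d'⟩ h
  simp only [oddParam, Prod.mk.injEq] at h ⊢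
  omega

lemma evenParam_injective : Function.Injective evenParam := by
  rintro ⟨⟨a, b⟩, c, d⟩ ⟨⟨a', b'⟩, c', d'⟩ h
  simp only [evenParam, Prod.mk.injEq] at h ⊢
  omega

lemma range_oddParam : Set.range oddParam = {k | Odd (coordSum k)} := by
  ext ⟨⟨a, b⟩, c, e⟩
  simp only [Set.mem_range, Set.mem_ofPred_eq, coordSum, Prod.exists, Prod.mk.injEq, oddParam]
  constructor
  · rintro ⟨a', b', c', d, ⟨rfl, rfl⟩, rfl, rfl⟩
    exact ⟨d, by ring⟩
  · rintro ⟨d, hd⟩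
    exact ⟨a, b, c, d, ⟨rfl, rfl⟩, rfl, by omega⟩

lemma range_evenParam : Set.range evenParam = {k | Even (coordSum k)} := by
  ext ⟨⟨n₁, n₂⟩, n₃, n₄⟩
  simp only [Set.mem_range, Set.mem_ofPred_eq, coordSum, Prod.exists, Prod.mk.injEq, evenParam]
  constructor
  · rintro ⟨a, b, c, d, ⟨rfl, rfl⟩, rfl, rfl⟩
    exact ⟨2 * d - a - b - c, by ring⟩
  · rintro ⟨m, hm⟩
    exact ⟨n₄ - m + n₁, n₄ - m + n₂, n₄ - m + n₃, n₄, ⟨by omega, by omega⟩, by omega, rfl⟩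

lemma tsum_one_sub_neg_one_zpow_mul (f : Z4 → ℂ) :
    ∑' k, (1 - (-1) ^ coordSum k) * f k = 2 * ∑' p, f (oddParam p) := by
  have hsupp :
      Function.support (fun k => (1 - (-1) ^ coordSum k) * f k) ⊆ Set.range oddParam := by
    rw [range_oddParam]
    intro k hk
    by_contra hodd
    simp [(Int.not_odd_iff_even.mp hodd).neg_one_zpow] at hk
  rw [← oddParam_injective.tsum_eq hsupp, ← tsum_mul_left]
  refine tsum_congr fun p => ?_
  have hodd : oddParam p ∈ {k | Odd (coordSum k)} := range_oddParam ▸ Set.mem_range_self p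
  rw [Odd.neg_one_zpow hodd]
  ring

lemma tsum_one_add_neg_one_zpow_mul (f : Z4 → ℂ) :
    ∑' k, (1 + (-1) ^ coordSum k) * f k = 2 * ∑' p, f (evenParam p) := by
  have hsupp :
      Function.support (fun k => (1 + (-1) ^ coordSum k) * f k) ⊆ Set.range evenParam := by
    rw [range_evenParam]
    intro k hk
    by_contra heven
    simp [(Int.not_even_iff_odd.mp heven).neg_one_zpow] at hk
  rw [← evenParam_injective.tsum_eq hsupp, ← tsum_mul_left]
  refine tsum_congr fun p => ?_
  have heven : evenParam p ∈ {k | Even (coordSum k)} := range_evenParam ▸ Set.mem_range_self p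
  rw [Even.neg_one_zpow heven]
  ring

/-- `evenParam p + (½, ½, ½, ½) = M (oddParam p)`, so the exponents agree because `M` is
symmetric and orthogonal. -/
lemma thetaTerm4_oddParam (τ z₁ z₂ z₃ z₄ : ℂ) (p : Z4) :
    thetaTerm4 τ 0 z₁ z₂ z₃ z₄ (oddParam p) =
      thetaTerm4 τ (1/2) ((z₁ - z₂ - z₃ + z₄) / 2) ((-z₁ + z₂ - z₃ + z₄) / 2)
        ((-z₁ - z₂ + z₃ + z₄) / 2) ((z₁ + z₂ + z₃ + z₄) / 2) (evenParam p) := by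
  simp only [thetaTerm4, thetaTerm, oddParam, evenParam, ← Complex.exp_add]
  congr 1
  push_cast
  ring

section

variable {τ : ℂ} (hτ : 0 < τ.im) (z₁ z₂ z₃ z₄ : ℂ)
include hτ

lemma theta3_prod_sub_theta4_prod_eq_tsum :
    theta3 τ z₁ * theta3 τ z₂ * theta3 τ z₃ * theta3 τ z₄ -
        theta4 τ z₁ * theta4 τ z₂ * theta4 τ z₃ * theta4 τ z₄ =
      ∑' k, (1 - (-1) ^ coordSum k) * thetaTerm4 τ 0 z₁ z₂ z₃ z₄ k := by
  have hshift (k : Z4) : (-1) ^ coordSum k * thetaTerm4 τ 0 z₁ z₂ z₃ z₄ k =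
      thetaTerm4 τ 0 (z₁ + 1/2) (z₂ + 1/2) (z₃ + 1/2) (z₄ + 1/2) k := by
    rw [thetaTerm4_add_half, mul_zero, Complex.exp_zero, one_mul]
  simp only [theta3_eq_tsum, theta4_eq_tsum, tsum_thetaTerm_mul_tsum_mul_tsum_mul_tsum hτ,
    sub_mul, one_mul, hshift]
  exact ((summable_thetaTerm4 hτ ..).tsum_sub (summable_thetaTerm4 hτ ..)).symm

lemma theta2_prod_add_theta1_prod_eq_tsum :
    theta2 τ z₁ * theta2 τ z₂ * theta2 τ z₃ * theta2 τ z₄ +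
        theta1 τ z₁ * theta1 τ z₂ * theta1 τ z₃ * theta1 τ z₄ =
      ∑' k, (1 + (-1) ^ coordSum k) * thetaTerm4 τ (1/2) z₁ z₂ z₃ z₄ k := by
  have hshift (k : Z4) : (-1) ^ coordSum k * thetaTerm4 τ (1/2) z₁ z₂ z₃ z₄ k =
      thetaTerm4 τ (1/2) (z₁ + 1/2) (z₂ + 1/2) (z₃ + 1/2) (z₄ + 1/2) k := by
    rw [thetaTerm4_add_half, show 4 * (π : ℂ) * I * (1/2) = 2 * π * I by ring,
      Complex.exp_two_pi_mul_I, one_mul]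
  simp only [theta2_eq_tsum, theta1_eq_tsum, tsum_thetaTerm_mul_tsum_mul_tsum_mul_tsum hτ,
    add_mul, one_mul, hshift]
  exact ((summable_thetaTerm4 hτ ..).tsum_add (summable_thetaTerm4 hτ ..)).symm

theorem riemann_theta_relation :
    theta3 τ z₁ * theta3 τ z₂ * theta3 τ z₃ * theta3 τ z₄ -
        theta4 τ z₁ * theta4 τ z₂ * theta4 τ z₃ * theta4 τ z₄ =
      theta2 τ ((z₁ - z₂ - z₃ + z₄) / 2) * theta2 τ ((-z₁ + z₂ - z₃ + z₄) / 2) *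
          theta2 τ ((-z₁ - z₂ + z₃ + z₄) / 2) * theta2 τ ((z₁ + z₂ + z₃ + z₄) / 2) +
        theta1 τ ((z₁ - z₂ - z₃ + z₄) / 2) * theta1 τ ((-z₁ + z₂ - z₃ + z₄) / 2) *
          theta1 τ ((-z₁ - z₂ + z₃ + z₄) / 2) * theta1 τ ((z₁ + z₂ + z₃ + z₄) / 2) := by
  rw [theta3_prod_sub_theta4_prod_eq_tsum hτ, theta2_prod_add_theta1_prod_eq_tsum hτ,
    tsum_one_sub_neg_one_zpow_mul, tsum_one_add_neg_one_zpow_mul]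
  simp only [thetaTerm4_oddParam]

end

end RiemannTheta

theorem sum_b_identity_eta (τ : ℂ) (hτ : 0 < τ.im) (x η : ℂ)
    (h1 : theta1 τ (2*x) ≠ 0) (h2 : theta1 τ (2*(x+η)) ≠ 0) :
    ∑ α ∈ Finset.Icc 1 3, (-1 : ℂ)^α * (th (α+1) τ η)^2 *
        (th (α+1) τ (2*x) / theta1 τ (2*x)) *
        (th (α+1) τ (2*(x+η)) / theta1 τ (2*(x+η))) =
      (theta1 τ η)^2 := by
  have hrel := RiemannTheta.riemann_theta_relation hτ η η (2 * x) (2 * (x + η))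
  rw [show (η - η - 2 * x + 2 * (x + η)) / 2 = η by ring,
    show (-η + η - 2 * x + 2 * (x + η)) / 2 = η by ring,
    show (-η - η + 2 * x + 2 * (x + η)) / 2 = 2 * x by ring,
    show (η + η + 2 * x + 2 * (x + η)) / 2 = 2 * (x + η) by ring] at hrel
  rw [Finset.sum_Icc_succ_top (by norm_num), Finset.sum_Icc_succ_top (by norm_num),
    Finset.Icc_self, Finset.sum_singleton]
  simp only [th]
  field_simp
  linear_combination hrel
end

section
/- The identity Σ_{α=1}^{3} (−1)^α θ_{α+1}(0)·θ_{α+1}(2η)·b_α(x)·b_α(x+η) = 0 holds for all complex x and η (where defined), where b_α(x) = θ_{α+1}(2x)/θ₁(2x). -/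
open Complex

/-!
Clearing the denominator `θ₁(2x) θ₁(2x + 2η)`, the identity becomes Jacobi's quartic relation
`θ₃(0)θ₃(z₂)θ₃(z₃)θ₃(z₂+z₃) = θ₂(0)θ₂(z₂)θ₂(z₃)θ₂(z₂+z₃) + θ₄(0)θ₄(z₂)θ₄(z₃)θ₄(z₂+z₃)`
at `z₂ = 2η`, `z₃ = 2x`. Each product is a series over `ℤ⁴` (over `(ℤ + ½)⁴` for `θ₂`) with
general term `exp (πiτ|k|² + 2πi⟨z, k⟩)`, where `z = (0, z₂, z₃, z₂ + z₃)`. In `θ₃⁴ - θ₄⁴` the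
terms with even coordinate sum cancel and those with odd sum double. The reflection in
`(1, 1, 1, -1)` preserves `|k|²`, and also `⟨z, k⟩` because `z ⊥ (1, 1, 1, -1)`; it maps the
half-integer points whose integer parts have even sum onto the integer points of odd sum.
Negating the first coordinate, harmless since `z₁ = 0`, swaps the two parity classes of
half-integer points, so the `θ₂` series is also twice the odd part of the `θ₃` series.
-/


open Real Function Set

noncomputable section

theorem Summable.tsum_eq_tsum_comp_add_tsum_comp {α β M : Type*} [AddCommGroup M]
    [UniformSpace M] [IsUniformAddGroup M] [CompleteSpace M] [T2Space M] {F : α → M}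
    (hF : Summable F)
    {f g : β → α} (hf : Injective f) (hg : Injective g) (hfg : range g = (range f)ᶜ) :
    ∑' a, F a = ∑' b, F (f b) + ∑' b, F (g b) := by
  have := hF.tsum_subtype_add_tsum_subtype_compl (range f)
  rwa [← hfg, tsum_range F hf, tsum_range F hg, eq_comm] at this

theorem hasSum_mul_mul_mul {ι₁ ι₂ ι₃ ι₄ R : Type*} [NormedRing R] [CompleteSpace R]
    {f₁ : ι₁ → R} {f₂ : ι₂ → R} {f₃ : ι₃ → R} {f₄ : ι₄ → R}
    (h₁ : Summable fun i => ‖f₁ i‖) (h₂ : Summable fun i => ‖f₂ i‖)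
    (h₃ : Summable fun i => ‖f₃ i‖) (h₄ : Summable fun i => ‖f₄ i‖) :
    HasSum (fun v : ι₁ × ι₂ × ι₃ × ι₄ => f₁ v.1 * (f₂ v.2.1 * (f₃ v.2.2.1 * f₄ v.2.2.2)))
      ((∑' i, f₁ i) * ((∑' i, f₂ i) * ((∑' i, f₃ i) * ∑' i, f₄ i))) := by
  have h₃₄ := h₃.mul_norm h₄
  have h₂₃₄ := h₂.mul_norm h₃₄
  rw [tsum_mul_tsum_of_summable_norm h₃ h₄, tsum_mul_tsum_of_summable_norm h₂ h₃₄,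
    tsum_mul_tsum_of_summable_norm h₁ h₂₃₄]
  exact (summable_mul_of_summable_norm h₁ h₂₃₄).hasSum

/-- `θ₃(z|τ) = ∑ₙ thetaTerm τ z n` and `θ₂(z|τ) = ∑ₙ thetaTerm τ z (n + 1/2)` hold by `rfl`. -/
def thetaTerm (τ z k : ℂ) : ℂ := cexp (π * I * τ * k ^ 2 + 2 * π * I * z * k)

theorem thetaTerm_add_half (τ z : ℂ) (n : ℤ) :
    thetaTerm τ (z + 1 / 2) n = (-1) ^ n * thetaTerm τ z n := by
  rw [thetaTerm, thetaTerm, ← exp_pi_mul_I, ← exp_int_mul, ← Complex.exp_add]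
  ring_nf

theorem theta4_eq_tsum (τ z : ℂ) : theta4 τ z = ∑' n : ℤ, (-1) ^ n * thetaTerm τ z n := by
  simp only [← thetaTerm_add_half]
  rfl

theorem thetaTerm_int_add (τ z s : ℂ) (n : ℤ) :
    thetaTerm τ z (n + s) = thetaTerm τ z s * jacobiTheta₂_term n (z + s * τ) τ := by
  rw [thetaTerm, thetaTerm, jacobiTheta₂_term, ← Complex.exp_add]
  ring_nf

theorem summable_norm_thetaTerm_int_add {τ : ℂ} (hτ : 0 < τ.im) (z s : ℂ) :
    Summable fun n : ℤ => ‖thetaTerm τ z (n + s)‖ := by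
  simp_rw [thetaTerm_int_add, norm_mul]
  exact (summable_norm_iff.mpr ((summable_jacobiTheta₂_term_iff _ τ).mpr hτ)).mul_left _

theorem summable_norm_thetaTerm_int {τ : ℂ} (hτ : 0 < τ.im) (z : ℂ) :
    Summable fun n : ℤ => ‖thetaTerm τ z n‖ := by
  simpa using summable_norm_thetaTerm_int_add hτ z 0

def quadTerm (τ z₂ z₃ k₁ k₂ k₃ k₄ : ℂ) : ℂ :=
  thetaTerm τ 0 k₁ * (thetaTerm τ z₂ k₂ * (thetaTerm τ z₃ k₃ * thetaTerm τ (z₂ + z₃) k₄))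

theorem quadTerm_reflect (τ z₂ z₃ k₁ k₂ k₃ k₄ : ℂ) {s : ℂ} (hs : 2 * s = k₁ + k₂ + k₃ - k₄) :
    quadTerm τ z₂ z₃ (k₁ - s) (k₂ - s) (k₃ - s) (k₄ + s) = quadTerm τ z₂ z₃ k₁ k₂ k₃ k₄ := by
  simp only [quadTerm, thetaTerm, ← Complex.exp_add]
  congr 1
  linear_combination 2 * π * I * τ * s * hs

theorem quadTerm_neg_fst (τ z₂ z₃ k₁ k₂ k₃ k₄ : ℂ) :
    quadTerm τ z₂ z₃ (-k₁) k₂ k₃ k₄ = quadTerm τ z₂ z₃ k₁ k₂ k₃ k₄ := by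
  simp only [quadTerm, thetaTerm]
  ring_nf

def coordSum (v : ℤ × ℤ × ℤ × ℤ) : ℤ := v.1 + v.2.1 + v.2.2.1 + v.2.2.2

def oddParam : ℤ × ℤ × ℤ × ℤ → ℤ × ℤ × ℤ × ℤ
  | (a, b, c, d) => (a, b, c, 2 * d + 1 - a - b - c)

/-- `evenParam w + ½` is the reflection of `oddParam w` in the hyperplane orthogonal to
`(1, 1, 1, -1)`. -/
def evenParam : ℤ × ℤ × ℤ × ℤ → ℤ × ℤ × ℤ × ℤ
  | (a, b, c, d) => (d - b - c, d - a - c, d - a - b, d)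

/-- `flipParam w + ½` is `evenParam w + ½` with its first coordinate negated. -/
def flipParam : ℤ × ℤ × ℤ × ℤ → ℤ × ℤ × ℤ × ℤ
  | (a, b, c, d) => (b + c - d - 1, d - a - c, d - a - b, d)

theorem oddParam_injective : Injective oddParam := by
  rintro ⟨a, b, c, d⟩ ⟨a', b', c', d'⟩ h
  simp only [oddParam, Prod.mk.injEq] at h ⊢
  omega

theorem evenParam_injective : Injective evenParam := by
  rintro ⟨a, b, c, d⟩ ⟨a', b', c', d'⟩ h
  simp only [evenParam, Prod.mk.injEq] at h ⊢
  omega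

theorem flipParam_injective : Injective flipParam := by
  rintro ⟨a, b, c, d⟩ ⟨a', b', c', d'⟩ h
  simp only [flipParam, Prod.mk.injEq] at h ⊢
  omega

theorem range_evenParam : range evenParam = {v | Even (coordSum v)} := by
  ext ⟨a, b, c, d⟩
  simp only [mem_range, Prod.exists, evenParam, coordSum, mem_ofPred_eq, Int.even_iff,
    Prod.mk.injEq]
  constructor
  · rintro ⟨p, q, r, s, h⟩
    omega
  · intro h
    let t := (3 * d - a - b - c) / 2
    exact ⟨a - d + t, b - d + t, c - d + t, d, by omega⟩

theorem range_oddParam : range oddParam = {v | Even (coordSum v)}ᶜ := by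
  ext ⟨a, b, c, d⟩
  simp only [mem_range, Prod.exists, oddParam, coordSum, mem_compl_iff, mem_ofPred_eq,
    Int.even_iff, Prod.mk.injEq]
  constructor
  · rintro ⟨p, q, r, s, h⟩
    omega
  · intro h
    exact ⟨a, b, c, (a + b + c + d - 1) / 2, by omega⟩

theorem range_flipParam : range flipParam = {v | Even (coordSum v)}ᶜ := by
  ext ⟨a, b, c, d⟩
  simp only [mem_range, Prod.exists, flipParam, coordSum, mem_compl_iff, mem_ofPred_eq,
    Int.even_iff, Prod.mk.injEq]
  constructor
  · rintro ⟨p, q, r, s, h⟩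
    omega
  · intro h
    let t := (a + 3 * d + 1 - b - c) / 2
    exact ⟨t - a - d - 1, t - d + b, t - d + c, d, by omega⟩

section QuadSeries

variable (τ z₂ z₃ : ℂ)

def quadTermInt (v : ℤ × ℤ × ℤ × ℤ) : ℂ := quadTerm τ z₂ z₃ v.1 v.2.1 v.2.2.1 v.2.2.2

def quadTermHalf (v : ℤ × ℤ × ℤ × ℤ) : ℂ :=
  quadTerm τ z₂ z₃ (v.1 + 1 / 2) (v.2.1 + 1 / 2) (v.2.2.1 + 1 / 2) (v.2.2.2 + 1 / 2)

theorem quadTermHalf_evenParam (w : ℤ × ℤ × ℤ × ℤ) :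
    quadTermHalf τ z₂ z₃ (evenParam w) = quadTermInt τ z₂ z₃ (oddParam w) := by
  obtain ⟨a, b, c, d⟩ := w
  have hs : 2 * ((d - a - b - c : ℂ) + 1 / 2) =
      (↑(d - b - c) + 1 / 2) + (↑(d - a - c) + 1 / 2) + (↑(d - a - b) + 1 / 2) - (↑d + 1 / 2) := by
    push_cast
    ring
  rw [quadTermHalf, quadTermInt, evenParam, oddParam, ← quadTerm_reflect τ z₂ z₃ _ _ _ _ hs]
  congr 1 <;> push_cast <;> ring

theorem quadTermHalf_flipParam (w : ℤ × ℤ × ℤ × ℤ) :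
    quadTermHalf τ z₂ z₃ (flipParam w) = quadTermHalf τ z₂ z₃ (evenParam w) := by
  obtain ⟨a, b, c, d⟩ := w
  rw [quadTermHalf, quadTermHalf, evenParam, flipParam, ← quadTerm_neg_fst]
  congr 1
  push_cast
  ring

variable {τ}

theorem hasSum_quadTermInt (hτ : 0 < τ.im) :
    HasSum (quadTermInt τ z₂ z₃)
      (theta3 τ 0 * (theta3 τ z₂ * (theta3 τ z₃ * theta3 τ (z₂ + z₃)))) :=
  (hasSum_mul_mul_mul (summable_norm_thetaTerm_int hτ 0) (summable_norm_thetaTerm_int hτ z₂)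
    (summable_norm_thetaTerm_int hτ z₃) (summable_norm_thetaTerm_int hτ (z₂ + z₃))).congr_fun
    fun _ => rfl

theorem hasSum_quadTermHalf (hτ : 0 < τ.im) :
    HasSum (quadTermHalf τ z₂ z₃)
      (theta2 τ 0 * (theta2 τ z₂ * (theta2 τ z₃ * theta2 τ (z₂ + z₃)))) :=
  (hasSum_mul_mul_mul (summable_norm_thetaTerm_int_add hτ 0 (1 / 2))
    (summable_norm_thetaTerm_int_add hτ z₂ (1 / 2)) (summable_norm_thetaTerm_int_add hτ z₃ (1 / 2))
    (summable_norm_thetaTerm_int_add hτ (z₂ + z₃) (1 / 2))).congr_fun fun _ => rfl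

theorem hasSum_neg_one_zpow_mul_quadTermInt (hτ : 0 < τ.im) :
    HasSum (fun v => (-1) ^ coordSum v * quadTermInt τ z₂ z₃ v)
      (theta4 τ 0 * (theta4 τ z₂ * (theta4 τ z₃ * theta4 τ (z₂ + z₃)))) := by
  have h (z : ℂ) : Summable fun n : ℤ => ‖(-1) ^ n * thetaTerm τ z n‖ := by
    simpa [norm_zpow] using summable_norm_thetaTerm_int hτ z
  simp only [theta4_eq_tsum]
  refine (hasSum_mul_mul_mul (h 0) (h z₂) (h z₃) (h (z₂ + z₃))).congr_fun fun v => ?_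
  simp only [coordSum, quadTermInt, quadTerm, zpow_add₀ (by norm_num : (-1 : ℂ) ≠ 0)]
  ring

end QuadSeries

theorem theta3_mul_eq_theta2_mul_add_theta4_mul {τ : ℂ} (hτ : 0 < τ.im) (z₂ z₃ : ℂ) :
    theta3 τ 0 * (theta3 τ z₂ * (theta3 τ z₃ * theta3 τ (z₂ + z₃))) =
      theta2 τ 0 * (theta2 τ z₂ * (theta2 τ z₃ * theta2 τ (z₂ + z₃))) +
        theta4 τ 0 * (theta4 τ z₂ * (theta4 τ z₃ * theta4 τ (z₂ + z₃))) := by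
  have h₃₄ := (hasSum_quadTermInt z₂ z₃ hτ).sub (hasSum_neg_one_zpow_mul_quadTermInt z₂ z₃ hτ)
  have h₂ := hasSum_quadTermHalf z₂ z₃ hτ
  have sign_even (w) : (-1 : ℂ) ^ coordSum (evenParam w) = 1 :=
    Even.neg_one_zpow (range_evenParam.subset (mem_range_self w))
  have sign_odd (w) : (-1 : ℂ) ^ coordSum (oddParam w) = -1 :=
    Odd.neg_one_zpow (Int.not_even_iff_odd.mp (range_oddParam.subset (mem_range_self w)))
  have odd_part := h₃₄.tsum_eq
  rw [h₃₄.summable.tsum_eq_tsum_comp_add_tsum_comp evenParam_injective oddParam_injective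
    (by rw [range_evenParam, range_oddParam])] at odd_part
  simp only [sign_even, sign_odd, one_mul, sub_self, tsum_zero, zero_add, neg_one_mul,
    sub_neg_eq_add, ← two_mul, tsum_mul_left] at odd_part
  have half_part := h₂.tsum_eq
  rw [h₂.summable.tsum_eq_tsum_comp_add_tsum_comp evenParam_injective flipParam_injective
    (by rw [range_evenParam, range_flipParam])] at half_part
  simp only [quadTermHalf_flipParam, quadTermHalf_evenParam] at half_part
  linear_combination half_part - odd_part

end

theorem sum_b_identity_zero_general (τ : ℂ) (hτ : 0 < τ.im) (x η : ℂ) :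
    ∑ α ∈ Finset.Icc 1 3, (-1 : ℂ)^α * th (α+1) τ 0 * th (α+1) τ (2*η) *
        (th (α+1) τ (2*x) / theta1 τ (2*x)) *
        (th (α+1) τ (2*(x+η)) / theta1 τ (2*(x+η))) = 0 := by
  have quartic := theta3_mul_eq_theta2_mul_add_theta4_mul hτ (2 * η) (2 * x)
  rw [show 2 * η + 2 * x = 2 * (x + η) by ring] at quartic
  calc _ = (theta3 τ 0 * (theta3 τ (2 * η) * (theta3 τ (2 * x) * theta3 τ (2 * (x + η)))) -
        theta2 τ 0 * (theta2 τ (2 * η) * (theta2 τ (2 * x) * theta2 τ (2 * (x + η)))) -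
        theta4 τ 0 * (theta4 τ (2 * η) * (theta4 τ (2 * x) * theta4 τ (2 * (x + η))))) /
        (theta1 τ (2 * x) * theta1 τ (2 * (x + η))) := by
          simp only [Finset.sum_Icc_succ_top, Nat.one_le_ofNat, Finset.Icc_self,
            Finset.sum_singleton, th, Nat.reduceAdd]
          ring
    _ = 0 := by rw [quartic, add_sub_cancel_left, sub_self, zero_div]

theorem sum_b_identity_zero (τ : ℂ) (hτ : 0 < τ.im) (x η : ℂ)
    (h1 : theta1 τ (2*x) ≠ 0) (h2 : theta1 τ (2*(x+η)) ≠ 0) :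
    ∑ α ∈ Finset.Icc 1 3, (-1 : ℂ)^α * th (α+1) τ 0 * th (α+1) τ (2*η) *
        (th (α+1) τ (2*x) / theta1 τ (2*x)) *
        (th (α+1) τ (2*(x+η)) / theta1 τ (2*(x+η))) = 0 :=
  sum_b_identity_zero_general τ hτ x η
end

section
/- For α ∈ {1,2,3}, the identity θ_{α+1}(2ζ−u+2x)·θ₁(2ζ−2x)·θ₁(2ζ+u) − θ_{α+1}(2ζ+u−2x)·θ₁(2ζ+2x)·θ₁(2ζ−u) = [θ₁(4ζ)·θ_{α+1}(2x)/θ_{α+1}(2ζ)]·θ₁(u−2x)·θ_{α+1}(u) holds for all complex ζ, u, x where θ_{α+1}(2ζ) ≠ 0. -/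
open Complex

noncomputable def Tt (τ c z : ℂ) (k : ℤ) : ℂ :=
  Complex.exp (Real.pi * Complex.I * τ * (k + c)^2 + 2 * Real.pi * Complex.I * z * (k + c))

noncomputable def T (τ c z : ℂ) : ℂ := ∑' k : ℤ, Tt τ c z k

lemma summable_Tt {τ : ℂ} (hτ : 0 < τ.im) (c z : ℂ) : Summable (Tt τ c z) := by
  have h1 : Summable (fun n : ℤ => jacobiTheta₂_term n (z + τ*c) τ) :=
    (summable_jacobiTheta₂_term_iff _ _).mpr hτ
  have h2 := h1.mul_left (Complex.exp (Real.pi*Complex.I*τ*c^2 + 2*Real.pi*Complex.I*z*c))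
  refine h2.congr fun k => ?_
  unfold Tt jacobiTheta₂_term
  rw [← Complex.exp_add]
  congr 1
  ring

lemma summable_norm_Tt {τ : ℂ} (hτ : 0 < τ.im) (c z : ℂ) :
    Summable (fun k => ‖Tt τ c z k‖) := summable_norm_iff.mpr (summable_Tt hτ c z)

lemma master {τ : ℂ} (hτ : 0 < τ.im) (c c' z w : ℂ) :
    T τ c z * T τ c' w =
      T (2*τ) ((c+c')/2) (z+w) * T (2*τ) ((c-c')/2) (z-w)
      + T (2*τ) ((c+c'+1)/2) (z+w) * T (2*τ) ((c-c'+1)/2) (z-w) := by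
  classical
  have hτ2 : 0 < (2*τ : ℂ).im := by
    have : (2*τ : ℂ).im = 2 * τ.im := by simp [Complex.mul_im]
    rw [this]; linarith
  set f := Tt τ c z with hfdef
  set g := Tt τ c' w with hgdef
  have hf := summable_Tt hτ c z
  have hg := summable_Tt hτ c' w
  set F := Tt (2*τ) ((c+c')/2) (z+w)
  set G := Tt (2*τ) ((c-c')/2) (z-w)
  set F' := Tt (2*τ) ((c+c'+1)/2) (z+w)
  set G' := Tt (2*τ) ((c-c'+1)/2) (z-w)
  have keyE : ∀ a b : ℤ, f (a+b) * g (a-b) = F a * G b := by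
    intro a b
    show Complex.exp _ * Complex.exp _ = Complex.exp _ * Complex.exp _
    rw [← Complex.exp_add, ← Complex.exp_add]
    congr 1
    push_cast
    ring
  have keyO : ∀ a b : ℤ, f (a+b+1) * g (a-b) = F' a * G' b := by
    intro a b
    show Complex.exp _ * Complex.exp _ = Complex.exp _ * Complex.exp _
    rw [← Complex.exp_add, ← Complex.exp_add]
    congr 1
    push_cast
    ring
  set E : ℤ×ℤ → ℂ := fun p => if (p.1+p.2) % 2 = 0 then f p.1 * g p.2 else 0 with hEdef
  set O : ℤ×ℤ → ℂ := fun p => if (p.1+p.2) % 2 = 0 then 0 else f p.1 * g p.2 with hOdef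
  have hE : HasSum E (T (2*τ) ((c+c')/2) (z+w) * T (2*τ) ((c-c')/2) (z-w)) := by
    have hinj : Function.Injective (fun p : ℤ×ℤ => ((p.1+p.2, p.1-p.2) : ℤ×ℤ)) := by
      intro p q h
      rw [Prod.ext_iff] at h ⊢
      simp only at h
      omega
    have hvan : ∀ p ∉ Set.range (fun p : ℤ×ℤ => ((p.1+p.2, p.1-p.2) : ℤ×ℤ)), E p = 0 := by
      intro p hp
      rw [hEdef]
      simp only
      rw [if_neg]
      intro hmod
      exact hp ⟨((p.1+p.2)/2, (p.1-p.2)/2), by rw [Prod.ext_iff]; constructor <;> simp <;> omega⟩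
    refine (hinj.hasSum_iff hvan).mp ?_
    have hcomp : (E ∘ (fun p : ℤ×ℤ => ((p.1+p.2, p.1-p.2) : ℤ×ℤ))) =
        fun p : ℤ×ℤ => F p.1 * G p.2 := by
      funext p
      simp only [Function.comp, hEdef]
      rw [if_pos (by omega), keyE]
    rw [hcomp]
    exact (summable_Tt hτ2 _ _).hasSum.mul (summable_Tt hτ2 _ _).hasSum
      (summable_mul_of_summable_norm (summable_norm_Tt hτ2 _ _) (summable_norm_Tt hτ2 _ _))
  have hO : HasSum O (T (2*τ) ((c+c'+1)/2) (z+w) * T (2*τ) ((c-c'+1)/2) (z-w)) := by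
    have hinj : Function.Injective (fun p : ℤ×ℤ => ((p.1+p.2+1, p.1-p.2) : ℤ×ℤ)) := by
      intro p q h
      rw [Prod.ext_iff] at h ⊢
      simp only at h
      omega
    have hvan : ∀ p ∉ Set.range (fun p : ℤ×ℤ => ((p.1+p.2+1, p.1-p.2) : ℤ×ℤ)), O p = 0 := by
      intro p hp
      rw [hOdef]
      simp only
      rw [if_pos]
      by_contra hmod
      exact hp ⟨((p.1+p.2-1)/2, (p.1-p.2-1)/2), by rw [Prod.ext_iff]; constructor <;> simp <;> omega⟩
    refine (hinj.hasSum_iff hvan).mp ?_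
    have hcomp : (O ∘ (fun p : ℤ×ℤ => ((p.1+p.2+1, p.1-p.2) : ℤ×ℤ))) =
        fun p : ℤ×ℤ => F' p.1 * G' p.2 := by
      funext p
      simp only [Function.comp, hOdef]
      rw [if_neg (by omega), keyO]
    rw [hcomp]
    exact (summable_Tt hτ2 _ _).hasSum.mul (summable_Tt hτ2 _ _).hasSum
      (summable_mul_of_summable_norm (summable_norm_Tt hτ2 _ _) (summable_norm_Tt hτ2 _ _))
  have hEO : HasSum (fun p : ℤ×ℤ => f p.1 * g p.2)
      (T (2*τ) ((c+c')/2) (z+w) * T (2*τ) ((c-c')/2) (z-w)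
        + T (2*τ) ((c+c'+1)/2) (z+w) * T (2*τ) ((c-c'+1)/2) (z-w)) := by
    refine (hE.add hO).congr_fun fun p => ?_
    rw [hEdef, hOdef]
    simp only
    by_cases h : (p.1+p.2) % 2 = 0
    · rw [if_pos h, if_pos h, add_zero]
    · rw [if_neg h, if_neg h, zero_add]
  rw [show T τ c z * T τ c' w = ∑' p : ℤ×ℤ, f p.1 * g p.2 from
    Summable.tsum_mul_tsum hf hg (summable_mul_of_summable_norm (summable_norm_Tt hτ c z)
      (summable_norm_Tt hτ c' w))]
  exact hEO.tsum_eq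

lemma T_c_add_one (σ c z : ℂ) : T σ (c+1) z = T σ c z := by
  unfold T
  rw [← (Equiv.addRight (1:ℤ)).tsum_eq (Tt σ c z)]
  refine tsum_congr fun k => ?_
  show Tt σ (c+1) z k = Tt σ c z (k+1)
  unfold Tt
  congr 1
  push_cast
  ring

lemma T_neg (σ c z : ℂ) : T σ c (-z) = T σ (-c) z := by
  unfold T
  rw [← (Equiv.neg ℤ).tsum_eq (Tt σ (-c) z)]
  refine tsum_congr fun k => ?_
  show Tt σ c (-z) k = Tt σ (-c) z (-k)
  unfold Tt
  congr 1
  push_cast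
  ring

lemma T_even0 (σ z : ℂ) : T σ 0 (-z) = T σ 0 z := by
  rw [T_neg, neg_zero]

lemma T_evenH (σ z : ℂ) : T σ (1/2) (-z) = T σ (1/2) z := by
  rw [T_neg, ← T_c_add_one σ (-(1/2)) z]
  norm_num

lemma T_shift (σ c z : ℂ) :
    T σ c (z+1) = Complex.exp (2*Real.pi*Complex.I*c) * T σ c z := by
  unfold T
  rw [← tsum_mul_left]
  refine tsum_congr fun k => ?_
  have h1 : Tt σ c (z+1) k = Complex.exp (2*Real.pi*Complex.I*c) * Tt σ c z k *
      Complex.exp ((k:ℂ) * (2*(Real.pi:ℂ)*Complex.I)) := by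
    unfold Tt
    rw [← Complex.exp_add, ← Complex.exp_add]
    congr 1
    push_cast
    ring
  rw [h1, Complex.exp_int_mul_two_pi_mul_I, mul_one]

lemma T_z10 (σ z : ℂ) : T σ 0 (z+1) = T σ 0 z := by
  rw [T_shift]
  norm_num

lemma T_z1H (σ z : ℂ) : T σ (1/2) (z+1) = - T σ (1/2) z := by
  rw [T_shift, show (2*(Real.pi:ℂ)*Complex.I*(1/2)) = (Real.pi:ℂ)*Complex.I by ring,
    Complex.exp_pi_mul_I, neg_one_mul]

lemma theta1_eq (τ z : ℂ) : theta1 τ z = T τ (1/2) (z+1/2) := rfl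

lemma theta2_eq (τ z : ℂ) : theta2 τ z = T τ (1/2) z := rfl

lemma theta3_eq (τ z : ℂ) : theta3 τ z = T τ 0 z := by
  refine tsum_congr fun k => ?_
  unfold Tt
  congr 1
  ring

lemma theta4_eq (τ z : ℂ) : theta4 τ z = T τ 0 (z+1/2) := by
  refine tsum_congr fun k => ?_
  unfold Tt
  congr 1
  ring

lemma pair1 {τ : ℂ} (hτ : 0 < τ.im) (p q : ℂ) :
    theta1 τ p * theta1 τ q =
      -(T (2*τ) (1/2) (p+q) * T (2*τ) 0 (p-q)) + T (2*τ) 0 (p+q) * T (2*τ) (1/2) (p-q) := by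
  rw [theta1_eq, theta1_eq, master hτ,
    show ((1/2+1/2)/2 : ℂ) = 1/2 by norm_num,
    show ((1/2-1/2)/2 : ℂ) = 0 by norm_num,
    show ((1/2+1/2+1)/2 : ℂ) = 0+1 by norm_num,
    show ((1/2-1/2+1)/2 : ℂ) = 1/2 by norm_num,
    show ((p+1/2)+(q+1/2) : ℂ) = (p+q)+1 by ring,
    show ((p+1/2)-(q+1/2) : ℂ) = p-q by ring,
    T_c_add_one, T_z10, T_z1H]
  ring

lemma pair2 {τ : ℂ} (hτ : 0 < τ.im) (p q : ℂ) :
    theta2 τ p * theta2 τ q =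
      T (2*τ) (1/2) (p+q) * T (2*τ) 0 (p-q) + T (2*τ) 0 (p+q) * T (2*τ) (1/2) (p-q) := by
  rw [theta2_eq, theta2_eq, master hτ,
    show ((1/2+1/2)/2 : ℂ) = 1/2 by norm_num,
    show ((1/2-1/2)/2 : ℂ) = 0 by norm_num,
    show ((1/2+1/2+1)/2 : ℂ) = 0+1 by norm_num,
    show ((1/2-1/2+1)/2 : ℂ) = 1/2 by norm_num,
    T_c_add_one]

lemma pair3 {τ : ℂ} (hτ : 0 < τ.im) (p q : ℂ) :
    theta3 τ p * theta3 τ q =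
      T (2*τ) 0 (p+q) * T (2*τ) 0 (p-q) + T (2*τ) (1/2) (p+q) * T (2*τ) (1/2) (p-q) := by
  rw [theta3_eq, theta3_eq, master hτ,
    show ((0+0)/2 : ℂ) = 0 by norm_num,
    show ((0-0)/2 : ℂ) = 0 by norm_num,
    show ((0+0+1)/2 : ℂ) = 1/2 by norm_num,
    show ((0-0+1)/2 : ℂ) = 1/2 by norm_num]

lemma pair4 {τ : ℂ} (hτ : 0 < τ.im) (p q : ℂ) :
    theta4 τ p * theta4 τ q =
      T (2*τ) 0 (p+q) * T (2*τ) 0 (p-q) - T (2*τ) (1/2) (p+q) * T (2*τ) (1/2) (p-q) := by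
  rw [theta4_eq, theta4_eq, master hτ,
    show ((0+0)/2 : ℂ) = 0 by norm_num,
    show ((0-0)/2 : ℂ) = 0 by norm_num,
    show ((0+0+1)/2 : ℂ) = 1/2 by norm_num,
    show ((0-0+1)/2 : ℂ) = 1/2 by norm_num,
    show ((p+1/2)+(q+1/2) : ℂ) = (p+q)+1 by ring,
    show ((p+1/2)-(q+1/2) : ℂ) = p-q by ring,
    T_z10, T_z1H]
  ring

theorem theta_three_term_identity (τ : ℂ) (hτ : 0 < τ.im) (α : ℕ)
    (hα : α = 1 ∨ α = 2 ∨ α = 3) (ζ u x : ℂ) (hden : th (α+1) τ (2*ζ) ≠ 0) :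
    th (α+1) τ (2*ζ - u + 2*x) * theta1 τ (2*ζ - 2*x) * theta1 τ (2*ζ + u)
      - th (α+1) τ (2*ζ + u - 2*x) * theta1 τ (2*ζ + 2*x) * theta1 τ (2*ζ - u) =
    (theta1 τ (4*ζ) * th (α+1) τ (2*x) / th (α+1) τ (2*ζ)) *
      theta1 τ (u - 2*x) * th (α+1) τ u := by
  rcases hα with rfl | rfl | rfl
  · have hth : th (1+1) = theta2 := rfl
    rw [hth] at hden ⊢
    have e1 : theta2 τ (2*ζ - u + 2*x) * theta2 τ (2*ζ) = T (2*τ) (1/2) (4*ζ-u+2*x) * T (2*τ) 0 (u-2*x) + T (2*τ) 0 (4*ζ-u+2*x) * T (2*τ) (1/2) (u-2*x) := by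
        rw [pair2 hτ, show (2*ζ-u+2*x)+(2*ζ) = 4*ζ-u+2*x by ring, show (2*ζ-u+2*x)-(2*ζ) = -(u-2*x) by ring, T_even0, T_evenH]
    have e2 : theta1 τ (2*ζ - 2*x) * theta1 τ (2*ζ + u) = -(T (2*τ) (1/2) (4*ζ+u-2*x) * T (2*τ) 0 (u+2*x)) + T (2*τ) 0 (4*ζ+u-2*x) * T (2*τ) (1/2) (u+2*x) := by
        rw [pair1 hτ, show (2*ζ-2*x)+(2*ζ+u) = 4*ζ+u-2*x by ring, show (2*ζ-2*x)-(2*ζ+u) = -(u+2*x) by ring, T_even0, T_evenH]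
    have e3 : theta2 τ (2*ζ + u - 2*x) * theta2 τ (2*ζ) = T (2*τ) (1/2) (4*ζ+u-2*x) * T (2*τ) 0 (u-2*x) + T (2*τ) 0 (4*ζ+u-2*x) * T (2*τ) (1/2) (u-2*x) := by
        rw [pair2 hτ, show (2*ζ+u-2*x)+(2*ζ) = 4*ζ+u-2*x by ring, show (2*ζ+u-2*x)-(2*ζ) = u-2*x by ring]
    have e4 : theta1 τ (2*ζ + 2*x) * theta1 τ (2*ζ - u) = -(T (2*τ) (1/2) (4*ζ-u+2*x) * T (2*τ) 0 (u+2*x)) + T (2*τ) 0 (4*ζ-u+2*x) * T (2*τ) (1/2) (u+2*x) := by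
        rw [pair1 hτ, show (2*ζ+2*x)+(2*ζ-u) = 4*ζ-u+2*x by ring, show (2*ζ+2*x)-(2*ζ-u) = u+2*x by ring]
    have e5 : theta1 τ (4*ζ) * theta1 τ (u - 2*x) = -(T (2*τ) (1/2) (4*ζ+u-2*x) * T (2*τ) 0 (4*ζ-u+2*x)) + T (2*τ) 0 (4*ζ+u-2*x) * T (2*τ) (1/2) (4*ζ-u+2*x) := by
        rw [pair1 hτ, show (4*ζ)+(u-2*x) = 4*ζ+u-2*x by ring, show (4*ζ)-(u-2*x) = 4*ζ-u+2*x by ring]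
    have e6 : theta2 τ (2*x) * theta2 τ u = T (2*τ) (1/2) (u+2*x) * T (2*τ) 0 (u-2*x) + T (2*τ) 0 (u+2*x) * T (2*τ) (1/2) (u-2*x) := by
        rw [pair2 hτ, show (2*x)+(u:ℂ) = u+2*x by ring, show (2*x)-(u:ℂ) = -(u-2*x) by ring, T_even0, T_evenH]
    rw [div_mul_eq_mul_div, div_mul_eq_mul_div, eq_div_iff hden]
    linear_combination (theta1 τ (2*ζ - 2*x) * theta1 τ (2*ζ + u)) * e1 + (T (2*τ) (1/2) (4*ζ-u+2*x) * T (2*τ) 0 (u-2*x) + T (2*τ) 0 (4*ζ-u+2*x) * T (2*τ) (1/2) (u-2*x)) * e2 - (theta1 τ (2*ζ + 2*x) * theta1 τ (2*ζ - u)) * e3 - (T (2*τ) (1/2) (4*ζ+u-2*x) * T (2*τ) 0 (u-2*x) + T (2*τ) 0 (4*ζ+u-2*x) * T (2*τ) (1/2) (u-2*x)) * e4 - (theta2 τ (2*x) * theta2 τ u) * e5 - (-(T (2*τ) (1/2) (4*ζ+u-2*x) * T (2*τ) 0 (4*ζ-u+2*x)) + T (2*τ) 0 (4*ζ+u-2*x)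 * T (2*τ) (1/2) (4*ζ-u+2*x)) * e6
  · have hth : th (2+1) = theta3 := rfl
    rw [hth] at hden ⊢
    have e1 : theta3 τ (2*ζ - u + 2*x) * theta3 τ (2*ζ) = T (2*τ) 0 (4*ζ-u+2*x) * T (2*τ) 0 (u-2*x) + T (2*τ) (1/2) (4*ζ-u+2*x) * T (2*τ) (1/2) (u-2*x) := by
        rw [pair3 hτ, show (2*ζ-u+2*x)+(2*ζ) = 4*ζ-u+2*x by ring, show (2*ζ-u+2*x)-(2*ζ) = -(u-2*x) by ring, T_even0, T_evenH]
    have e2 : theta1 τ (2*ζ - 2*x) * theta1 τ (2*ζ + u) = -(T (2*τ) (1/2) (4*ζ+u-2*x) * T (2*τ) 0 (u+2*x)) + T (2*τ) 0 (4*ζ+u-2*x) * T (2*τ) (1/2) (u+2*x) := by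
        rw [pair1 hτ, show (2*ζ-2*x)+(2*ζ+u) = 4*ζ+u-2*x by ring, show (2*ζ-2*x)-(2*ζ+u) = -(u+2*x) by ring, T_even0, T_evenH]
    have e3 : theta3 τ (2*ζ + u - 2*x) * theta3 τ (2*ζ) = T (2*τ) 0 (4*ζ+u-2*x) * T (2*τ) 0 (u-2*x) + T (2*τ) (1/2) (4*ζ+u-2*x) * T (2*τ) (1/2) (u-2*x) := by
        rw [pair3 hτ, show (2*ζ+u-2*x)+(2*ζ) = 4*ζ+u-2*x by ring, show (2*ζ+u-2*x)-(2*ζ) = u-2*x by ring]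
    have e4 : theta1 τ (2*ζ + 2*x) * theta1 τ (2*ζ - u) = -(T (2*τ) (1/2) (4*ζ-u+2*x) * T (2*τ) 0 (u+2*x)) + T (2*τ) 0 (4*ζ-u+2*x) * T (2*τ) (1/2) (u+2*x) := by
        rw [pair1 hτ, show (2*ζ+2*x)+(2*ζ-u) = 4*ζ-u+2*x by ring, show (2*ζ+2*x)-(2*ζ-u) = u+2*x by ring]
    have e5 : theta1 τ (4*ζ) * theta1 τ (u - 2*x) = -(T (2*τ) (1/2) (4*ζ+u-2*x) * T (2*τ) 0 (4*ζ-u+2*x)) + T (2*τ) 0 (4*ζ+u-2*x) * T (2*τ) (1/2) (4*ζ-u+2*x) := by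
        rw [pair1 hτ, show (4*ζ)+(u-2*x) = 4*ζ+u-2*x by ring, show (4*ζ)-(u-2*x) = 4*ζ-u+2*x by ring]
    have e6 : theta3 τ (2*x) * theta3 τ u = T (2*τ) 0 (u+2*x) * T (2*τ) 0 (u-2*x) + T (2*τ) (1/2) (u+2*x) * T (2*τ) (1/2) (u-2*x) := by
        rw [pair3 hτ, show (2*x)+(u:ℂ) = u+2*x by ring, show (2*x)-(u:ℂ) = -(u-2*x) by ring, T_even0, T_evenH]
    rw [div_mul_eq_mul_div, div_mul_eq_mul_div, eq_div_iff hden]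
    linear_combination (theta1 τ (2*ζ - 2*x) * theta1 τ (2*ζ + u)) * e1 + (T (2*τ) 0 (4*ζ-u+2*x) * T (2*τ) 0 (u-2*x) + T (2*τ) (1/2) (4*ζ-u+2*x) * T (2*τ) (1/2) (u-2*x)) * e2 - (theta1 τ (2*ζ + 2*x) * theta1 τ (2*ζ - u)) * e3 - (T (2*τ) 0 (4*ζ+u-2*x) * T (2*τ) 0 (u-2*x) + T (2*τ) (1/2) (4*ζ+u-2*x) * T (2*τ) (1/2) (u-2*x)) * e4 - (theta3 τ (2*x) * theta3 τ u) * e5 - (-(T (2*τ) (1/2) (4*ζ+u-2*x) * T (2*τ) 0 (4*ζ-u+2*x)) + T (2*τ) 0 (4*ζ+u-2*x) * T (2*τ) (1/2) (4*ζ-u+2*x)) * e6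
  · have hth : th (3+1) = theta4 := rfl
    rw [hth] at hden ⊢
    have e1 : theta4 τ (2*ζ - u + 2*x) * theta4 τ (2*ζ) = T (2*τ) 0 (4*ζ-u+2*x) * T (2*τ) 0 (u-2*x) - T (2*τ) (1/2) (4*ζ-u+2*x) * T (2*τ) (1/2) (u-2*x) := by
        rw [pair4 hτ, show (2*ζ-u+2*x)+(2*ζ) = 4*ζ-u+2*x by ring, show (2*ζ-u+2*x)-(2*ζ) = -(u-2*x) by ring, T_even0, T_evenH]
    have e2 : theta1 τ (2*ζ - 2*x) * theta1 τ (2*ζ + u) = -(T (2*τ) (1/2) (4*ζ+u-2*x) * T (2*τ) 0 (u+2*x)) + T (2*τ) 0 (4*ζ+u-2*x) * T (2*τ) (1/2) (u+2*x) := by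
        rw [pair1 hτ, show (2*ζ-2*x)+(2*ζ+u) = 4*ζ+u-2*x by ring, show (2*ζ-2*x)-(2*ζ+u) = -(u+2*x) by ring, T_even0, T_evenH]
    have e3 : theta4 τ (2*ζ + u - 2*x) * theta4 τ (2*ζ) = T (2*τ) 0 (4*ζ+u-2*x) * T (2*τ) 0 (u-2*x) - T (2*τ) (1/2) (4*ζ+u-2*x) * T (2*τ) (1/2) (u-2*x) := by
        rw [pair4 hτ, show (2*ζ+u-2*x)+(2*ζ) = 4*ζ+u-2*x by ring, show (2*ζ+u-2*x)-(2*ζ) = u-2*x by ring]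
    have e4 : theta1 τ (2*ζ + 2*x) * theta1 τ (2*ζ - u) = -(T (2*τ) (1/2) (4*ζ-u+2*x) * T (2*τ) 0 (u+2*x)) + T (2*τ) 0 (4*ζ-u+2*x) * T (2*τ) (1/2) (u+2*x) := by
        rw [pair1 hτ, show (2*ζ+2*x)+(2*ζ-u) = 4*ζ-u+2*x by ring, show (2*ζ+2*x)-(2*ζ-u) = u+2*x by ring]
    have e5 : theta1 τ (4*ζ) * theta1 τ (u - 2*x) = -(T (2*τ) (1/2) (4*ζ+u-2*x) * T (2*τ) 0 (4*ζ-u+2*x)) + T (2*τ) 0 (4*ζ+u-2*x) * T (2*τ) (1/2) (4*ζ-u+2*x) := by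
        rw [pair1 hτ, show (4*ζ)+(u-2*x) = 4*ζ+u-2*x by ring, show (4*ζ)-(u-2*x) = 4*ζ-u+2*x by ring]
    have e6 : theta4 τ (2*x) * theta4 τ u = T (2*τ) 0 (u+2*x) * T (2*τ) 0 (u-2*x) - T (2*τ) (1/2) (u+2*x) * T (2*τ) (1/2) (u-2*x) := by
        rw [pair4 hτ, show (2*x)+(u:ℂ) = u+2*x by ring, show (2*x)-(u:ℂ) = -(u-2*x) by ring, T_even0, T_evenH]
    rw [div_mul_eq_mul_div, div_mul_eq_mul_div, eq_div_iff hden]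
    linear_combination (theta1 τ (2*ζ - 2*x) * theta1 τ (2*ζ + u)) * e1 + (T (2*τ) 0 (4*ζ-u+2*x) * T (2*τ) 0 (u-2*x) - T (2*τ) (1/2) (4*ζ-u+2*x) * T (2*τ) (1/2) (u-2*x)) * e2 - (theta1 τ (2*ζ + 2*x) * theta1 τ (2*ζ - u)) * e3 - (T (2*τ) 0 (4*ζ+u-2*x) * T (2*τ) 0 (u-2*x) - T (2*τ) (1/2) (4*ζ+u-2*x) * T (2*τ) (1/2) (u-2*x)) * e4 - (theta4 τ (2*x) * theta4 τ u) * e5 - (-(T (2*τ) (1/2) (4*ζ+u-2*x) * T (2*τ) 0 (4*ζ-u+2*x)) + T (2*τ) 0 (4*ζ+u-2*x) * T (2*τ) (1/2) (4*ζ-u+2*x)) * e6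
end

section
/- The differential operators s₀ = ζ∂_ζ − ℓ, s₊ = (ζ/2)·((x + x⁻¹)(2ℓ − ζ∂_ζ) − (x² − 1)∂_x), s₋ = (ζ⁻¹/2)·((x + x⁻¹)ζ∂_ζ − (x² − 1)∂_x), acting on smooth (or formal) functions of two variables ζ, x, satisfy the sl(2) commutation relations [s₀, s±] = ±s±, [s₊, s₋] = 2s₀. -/
open Complex

/-- Partial derivative in the first variable of a function on `ℂ × ℂ`. -/
noncomputable def pd1 (G : ℂ × ℂ → ℂ) (p : ℂ × ℂ) : ℂ := fderiv ℂ G p (1, 0)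

/-- Partial derivative in the second variable of a function on `ℂ × ℂ`. -/
noncomputable def pd2 (G : ℂ × ℂ → ℂ) (p : ℂ × ℂ) : ℂ := fderiv ℂ G p (0, 1)

/-!
Each of `s₀, s₊, s₋` is a first-order operator `f ↦ D_V f + c f` with vector field `V` and
potential `c`. The commutator of two such operators `(V, c)` and `(W, d)` is again of this form:
its vector field is the Lie bracket `[V, W]` (the second derivatives of `f` cancel by symmetry)
and its potential is `D_V d - D_W c`. The sl(2) relations thus reduce to
`[V₀, V±] = ±V±`, `[V₊, V₋] = 2V₀` and the matching identities between the potentials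
`-ℓ`, `ℓζ(x + x⁻¹)` and `0`, which are direct computations.
-/

open VectorField

section FirstOrderOp

variable {𝕜 : Type*} [NontriviallyNormedField 𝕜]
  {E : Type*} [NormedAddCommGroup E] [NormedSpace 𝕜 E]
  {F : Type*} [NormedAddCommGroup F] [NormedSpace 𝕜 F]

variable (𝕜) in
noncomputable def firstOrderOp (V : E → E) (c : E → 𝕜) (f : E → F) (x : E) : F :=
  fderiv 𝕜 f x (V x) + c x • f x

theorem fderiv_firstOrderOp_apply {W : E → E} {d : E → 𝕜} {f : E → F} {x : E}
    (hf : ContDiffAt 𝕜 2 f x) (hW : DifferentiableAt 𝕜 W x) (hd : DifferentiableAt 𝕜 d x)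
    (v : E) :
    fderiv 𝕜 (firstOrderOp 𝕜 W d f) x v =
      fderiv 𝕜 (fun y => fderiv 𝕜 f y (W y)) x v + fderiv 𝕜 d x v • f x +
        d x • fderiv 𝕜 f x v := by
  have hf' : DifferentiableAt 𝕜 f x := hf.differentiableAt two_ne_zero
  have hDfW : DifferentiableAt 𝕜 (fun y => fderiv 𝕜 f y (W y)) x :=
    ((hf.fderiv_right (m := 1) le_rfl).differentiableAt one_ne_zero).clm_apply hW
  change fderiv 𝕜 (fun y => fderiv 𝕜 f y (W y) + d y • f y) x v = _
  rw [fderiv_fun_add hDfW (hd.fun_smul hf'), fderiv_fun_smul hd hf']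
  simp only [add_apply, smul_apply, ContinuousLinearMap.smulRight_apply]
  abel

theorem firstOrderOp_commutator_apply {V W : E → E} {c d : E → 𝕜} {f : E → F} {x : E}
    {n : WithTop ℕ∞} (hf : ContDiffAt 𝕜 n f x) (hn : minSmoothness 𝕜 2 ≤ n)
    (hV : DifferentiableAt 𝕜 V x) (hW : DifferentiableAt 𝕜 W x)
    (hc : DifferentiableAt 𝕜 c x) (hd : DifferentiableAt 𝕜 d x) :
    firstOrderOp 𝕜 V c (firstOrderOp 𝕜 W d f) x - firstOrderOp 𝕜 W d (firstOrderOp 𝕜 V c f) x =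
      fderiv 𝕜 f x (lieBracket 𝕜 V W x) + (fderiv 𝕜 d x (V x) - fderiv 𝕜 c x (W x)) • f x := by
  have hf2 : ContDiffAt 𝕜 2 f x := hf.of_le (le_minSmoothness.trans hn)
  rw [fderiv_apply_lieBracket hf hn hW hV]
  simp only [firstOrderOp, fderiv_firstOrderOp_apply hf2 hW hd,
    fderiv_firstOrderOp_apply hf2 hV hc, smul_add, sub_smul, smul_smul, mul_comm (c x)]
  abel

theorem fderiv_fun_inv {f : E → 𝕜} {x : E} (hf : DifferentiableAt 𝕜 f x) (hx : f x ≠ 0) :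
    fderiv 𝕜 (fun y => (f y)⁻¹) x = -(f x ^ 2)⁻¹ • fderiv 𝕜 f x :=
  ((hasDerivAt_inv hx).comp_hasFDerivAt x hf.hasFDerivAt).fderiv

end FirstOrderOp

theorem fderiv_apply_eq_pd (G : ℂ × ℂ → ℂ) (p : ℂ × ℂ) (a b : ℂ) :
    fderiv ℂ G p (a, b) = a * pd1 G p + b * pd2 G p := by
  have hab : ((a, b) : ℂ × ℂ) = a • (1, 0) + b • (0, 1) := by ext <;> simp
  rw [hab, map_add, map_smul, map_smul, pd1, pd2, smul_eq_mul, smul_eq_mul]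

def cartanField : ℂ × ℂ → ℂ × ℂ := fun q => (q.1, 0)

noncomputable def raisingField : ℂ × ℂ → ℂ × ℂ := fun q =>
  (-2⁻¹ * q.1 ^ 2 * (q.2 + q.2⁻¹), -2⁻¹ * q.1 * (q.2 ^ 2 - 1))

-- `q.1⁻¹ * q.1` rather than `1`, so that the field matches `s₋` also at `q.1 = 0`, where `0⁻¹ = 0`.
noncomputable def loweringField : ℂ × ℂ → ℂ × ℂ := fun q =>
  (2⁻¹ * q.1⁻¹ * q.1 * (q.2 + q.2⁻¹), -2⁻¹ * q.1⁻¹ * (q.2 ^ 2 - 1))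

noncomputable def raisingPotential (ℓ : ℂ) : ℂ × ℂ → ℂ := fun q => ℓ * q.1 * (q.2 + q.2⁻¹)

section Brackets

variable {z x : ℂ}

theorem lieBracket_cartanField_raisingField (hx : x ≠ 0) :
    lieBracket ℂ cartanField raisingField (z, x) = raisingField (z, x) := by
  unfold lieBracket cartanField raisingField
  simp (disch := first | assumption | fun_prop (disch := assumption)) only
    [DifferentiableAt.fderiv_prodMk, fderiv_fun_mul, fderiv_fun_add, fderiv_fun_sub,
    fderiv_fun_const, fderiv_fst, fderiv_snd, fderiv_fun_inv, fderiv_fun_pow,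
    ContinuousLinearMap.prod_apply, add_apply, smul_apply, sub_apply, Pi.zero_apply, zero_apply,
    ContinuousLinearMap.coe_fst', ContinuousLinearMap.coe_snd', smul_eq_mul, Prod.mk_sub_mk,
    Prod.ext_iff]
  constructor <;> ring

theorem lieBracket_cartanField_loweringField (hz : z ≠ 0) (hx : x ≠ 0) :
    lieBracket ℂ cartanField loweringField (z, x) = -loweringField (z, x) := by
  unfold lieBracket cartanField loweringField
  simp (disch := first | assumption | fun_prop (disch := assumption)) only
    [DifferentiableAt.fderiv_prodMk, fderiv_fun_mul, fderiv_fun_add, fderiv_fun_sub,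
    fderiv_fun_const, fderiv_fst, fderiv_snd, fderiv_fun_inv, fderiv_fun_pow,
    ContinuousLinearMap.prod_apply, add_apply, smul_apply, sub_apply, Pi.zero_apply, zero_apply,
    ContinuousLinearMap.coe_fst', ContinuousLinearMap.coe_snd', smul_eq_mul, Prod.mk_sub_mk,
    Prod.neg_mk, Prod.ext_iff]
  constructor <;> field_simp <;> ring

theorem lieBracket_raisingField_loweringField (hz : z ≠ 0) (hx : x ≠ 0) :
    lieBracket ℂ raisingField loweringField (z, x) = (2 : ℂ) • cartanField (z, x) := by
  unfold lieBracket cartanField raisingField loweringField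
  simp (disch := first | assumption | fun_prop (disch := assumption)) only
    [DifferentiableAt.fderiv_prodMk, fderiv_fun_mul, fderiv_fun_add, fderiv_fun_sub,
    fderiv_fun_const, fderiv_fst, fderiv_snd, fderiv_fun_inv, fderiv_fun_pow,
    ContinuousLinearMap.prod_apply, add_apply, smul_apply, sub_apply, Pi.zero_apply, zero_apply,
    ContinuousLinearMap.coe_fst', ContinuousLinearMap.coe_snd', smul_eq_mul, Prod.mk_sub_mk,
    Prod.smul_mk, Prod.ext_iff]
  constructor <;> field_simp <;> ring

theorem fderiv_raisingPotential_apply (ℓ : ℂ) (hx : x ≠ 0) (v : ℂ × ℂ) :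
    fderiv ℂ (raisingPotential ℓ) (z, x) v =
      ℓ * (v.1 * (x + x⁻¹) + z * (1 - (x ^ 2)⁻¹) * v.2) := by
  unfold raisingPotential
  simp (disch := first | assumption | fun_prop (disch := assumption)) only
    [fderiv_fun_mul, fderiv_fun_add, fderiv_fun_const, fderiv_fst, fderiv_snd, fderiv_fun_inv,
    add_apply, smul_apply, Pi.zero_apply, zero_apply, ContinuousLinearMap.coe_fst',
    ContinuousLinearMap.coe_snd', smul_eq_mul]
  ring

theorem fderiv_raisingPotential_cartanField (ℓ : ℂ) (hx : x ≠ 0) :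
    fderiv ℂ (raisingPotential ℓ) (z, x) (cartanField (z, x)) = raisingPotential ℓ (z, x) := by
  rw [fderiv_raisingPotential_apply ℓ hx, cartanField, raisingPotential]
  ring

theorem fderiv_raisingPotential_loweringField (ℓ : ℂ) (hz : z ≠ 0) (hx : x ≠ 0) :
    fderiv ℂ (raisingPotential ℓ) (z, x) (loweringField (z, x)) = 2 * ℓ := by
  rw [fderiv_raisingPotential_apply ℓ hx, loweringField]
  field_simp
  ring

end Brackets

theorem sl2_two_variable_vector_fields (ℓ : ℂ)
    (s0 sp sm : (ℂ × ℂ → ℂ) → (ℂ × ℂ → ℂ))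
    (hs0 : ∀ G p, s0 G p = p.1 * pd1 G p - ℓ * G p)
    (hsp : ∀ G p, sp G p = p.1 / 2 *
      ((p.2 + p.2⁻¹) * (2 * ℓ * G p - p.1 * pd1 G p) - (p.2^2 - 1) * pd2 G p))
    (hsm : ∀ G p, sm G p = p.1⁻¹ / 2 *
      ((p.2 + p.2⁻¹) * (p.1 * pd1 G p) - (p.2^2 - 1) * pd2 G p))
    (F : ℂ × ℂ → ℂ) (hF : ContDiff ℂ ⊤ F) :
    ∀ p : ℂ × ℂ, p.1 ≠ 0 → p.2 ≠ 0 →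
      (s0 (sp F) p - sp (s0 F) p = sp F p) ∧
      (s0 (sm F) p - sm (s0 F) p = -(sm F p)) ∧
      (sp (sm F) p - sm (sp F) p = 2 * s0 F p) := by
  obtain rfl : s0 = firstOrderOp ℂ cartanField (fun _ => -ℓ) := by
    funext G q
    rw [hs0, firstOrderOp, cartanField, fderiv_apply_eq_pd, smul_eq_mul]
    ring
  obtain rfl : sp = firstOrderOp ℂ raisingField (raisingPotential ℓ) := by
    funext G q
    rw [hsp, firstOrderOp, raisingField, raisingPotential, fderiv_apply_eq_pd, smul_eq_mul]
    ring
  obtain rfl : sm = firstOrderOp ℂ loweringField (fun _ => 0) := by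
    funext G q
    rw [hsm, firstOrderOp, loweringField, fderiv_apply_eq_pd, zero_smul]
    ring
  rintro ⟨z, x⟩ (hz : z ≠ 0) (hx : x ≠ 0)
  have hn : minSmoothness ℂ 2 ≤ ⊤ := le_top
  have h0 : DifferentiableAt ℂ cartanField (z, x) := by unfold cartanField; fun_prop
  have hp : DifferentiableAt ℂ raisingField (z, x) := by
    unfold raisingField; fun_prop (disch := assumption)
  have hm : DifferentiableAt ℂ loweringField (z, x) := by
    unfold loweringField; fun_prop (disch := assumption)
  have hc : DifferentiableAt ℂ (raisingPotential ℓ) (z, x) := by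
    unfold raisingPotential; fun_prop (disch := assumption)
  have hconst (a : ℂ) : DifferentiableAt ℂ (fun _ : ℂ × ℂ => a) (z, x) :=
    differentiableAt_const a
  refine ⟨?_, ?_, ?_⟩
  · rw [firstOrderOp_commutator_apply hF.contDiffAt hn h0 hp (hconst _) hc,
      lieBracket_cartanField_raisingField hx, fderiv_raisingPotential_cartanField ℓ hx]
    simp only [firstOrderOp, fderiv_fun_const, Pi.zero_apply, zero_apply, smul_eq_mul]
    ring
  · rw [firstOrderOp_commutator_apply hF.contDiffAt hn h0 hm (hconst _) (hconst _),
      lieBracket_cartanField_loweringField hz hx]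
    simp only [firstOrderOp, fderiv_fun_const, Pi.zero_apply, zero_apply, map_neg, smul_eq_mul]
    ring
  · rw [firstOrderOp_commutator_apply hF.contDiffAt hn hp hm hc (hconst _),
      lieBracket_raisingField_loweringField hz hx, fderiv_raisingPotential_loweringField ℓ hz hx]
    simp only [firstOrderOp, fderiv_fun_const, Pi.zero_apply, zero_apply, map_smul, smul_eq_mul]
    ring
end

section
/- Let q ∈ ℂ*, q² ≠ 1, u ∈ ℂ*, ℓ ∈ ℂ. With the U_q(sl(2)) generators A, B, C, D realized as (AF)(z) = F(qz), (DF)(z) = F(q⁻¹z), (BF)(z) = z/(q−q⁻¹)(q^ℓF(q⁻¹z) − q^{−ℓ}F(qz)), (CF)(z) = z⁻¹/(q−q⁻¹)(q^ℓF(qz) − q^{−ℓ}F(q⁻¹z)), the 2×2 matrix L(u) = [[uA − u⁻¹D, (q−q⁻¹)C], [(q−q⁻¹)B, uD − u⁻¹A]] admits the factorization L(u)F(z) = (q^ℓu − q^{−ℓ}u⁻¹)·Φ̂⁻¹(uq^{2ℓ}; z)·diag(q^{−ℓ}F(qz), q^ℓF(q⁻¹z))·Φ̂(u; z), where Φ̂(u;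 z) = [[1, q^ℓu⁻¹z⁻¹], [1, q^{−ℓ}uz⁻¹]], valid wherever Φ̂(uq^{2ℓ}; z) is invertible. -/
/-!
Writing `a = q^ℓ`, one has `Φ̂(uq^{2ℓ}; z) = [[1, a⁻¹u⁻¹z⁻¹], [1, auz⁻¹]]`, and multiplying the claimed
factorization on the left by this matrix turns it into four rational identities in `a, u, z`
and the two values `F(qz)`, `F(q⁻¹z)`, checked by clearing denominators.
-/

open Complex Matrix

/-- The intertwining matrix `Φ̂(u;z)`. -/
noncomputable def PhiHat (q ℓ u z : ℂ) : Matrix (Fin 2) (Fin 2) ℂ :=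
  !![1, q ^ ℓ * u⁻¹ * z⁻¹; 1, q ^ (-ℓ) * u * z⁻¹]

section Field

variable {K : Type*} [Field K]

/-- `Φ̂(u;z)` with `a = q^ℓ`. -/
def phiMatrix (a u z : K) : Matrix (Fin 2) (Fin 2) K :=
  !![1, a * u⁻¹ * z⁻¹; 1, a⁻¹ * u * z⁻¹]

/-- `L(u)F(z)` with `a = q^ℓ`, `f = F(qz)` and `g = F(q⁻¹z)`. -/
def lOperatorMatrix (a u z f g : K) : Matrix (Fin 2) (Fin 2) K :=
  !![u * f - u⁻¹ * g, z⁻¹ * (a * f - a⁻¹ * g); z * (a * g - a⁻¹ * f), u * g - u⁻¹ * f]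

theorem det_phiMatrix_mul_sq (a u z : K) :
    (phiMatrix a (u * a ^ 2) z).det = z⁻¹ * (a⁻¹ * (u * a ^ 2) - a * (u * a ^ 2)⁻¹) := by
  rw [phiMatrix, det_fin_two_of]
  ring

/-- Since `0⁻¹ = 0`, the determinant also vanishes when `a`, `u` or `z` is zero. -/
theorem ne_zero_of_isUnit_det_phiMatrix_mul_sq {a u z : K}
    (h : IsUnit (phiMatrix a (u * a ^ 2) z).det) : a ≠ 0 ∧ u ≠ 0 ∧ z ≠ 0 := by
  rw [isUnit_iff_ne_zero, det_phiMatrix_mul_sq] at h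
  refine ⟨?_, ?_, ?_⟩ <;> rintro rfl <;> simp at h

theorem phiMatrix_mul_sq_mul_lOperatorMatrix {a u z : K} (ha : a ≠ 0) (hu : u ≠ 0) (hz : z ≠ 0)
    (f g : K) :
    phiMatrix a (u * a ^ 2) z * lOperatorMatrix a u z f g =
      (a * u - a⁻¹ * u⁻¹) • (!![a⁻¹ * f, 0; 0, a * g] * phiMatrix a u z) := by
  ext i j
  fin_cases i <;> fin_cases j <;>
    simp [phiMatrix, lOperatorMatrix, mul_apply, Fin.sum_univ_two] <;>
    field_simp <;> ring

theorem lOperatorMatrix_eq_factorization {a u z : K}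
    (h : IsUnit (phiMatrix a (u * a ^ 2) z).det) (f g : K) :
    lOperatorMatrix a u z f g =
      (a * u - a⁻¹ * u⁻¹) •
        ((phiMatrix a (u * a ^ 2) z)⁻¹ * !![a⁻¹ * f, 0; 0, a * g] * phiMatrix a u z) := by
  obtain ⟨ha, hu, hz⟩ := ne_zero_of_isUnit_det_phiMatrix_mul_sq h
  rw [Matrix.mul_assoc, ← Matrix.mul_smul, ← phiMatrix_mul_sq_mul_lOperatorMatrix ha hu hz]
  exact (nonsing_inv_mul_cancel_left _ _ h).symm

end Field

theorem PhiHat_eq_phiMatrix (q ℓ u z : ℂ) : PhiHat q ℓ u z = phiMatrix (q ^ ℓ) u z := by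
  rw [PhiHat, phiMatrix, cpow_neg]

theorem trigonometric_L_operator_factorization_general (q ℓ u : ℂ)
    (F : ℂ → ℂ) (z : ℂ)
    (hinv : IsUnit (PhiHat q ℓ (u * q ^ (2*ℓ)) z).det) :
    !![u * F (q * z) - u⁻¹ * F (q⁻¹ * z),
        z⁻¹ * (q ^ ℓ * F (q * z) - q ^ (-ℓ) * F (q⁻¹ * z));
      z * (q ^ ℓ * F (q⁻¹ * z) - q ^ (-ℓ) * F (q * z)),
        u * F (q⁻¹ * z) - u⁻¹ * F (q * z)] =
    (q ^ ℓ * u - q ^ (-ℓ) * u⁻¹) •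
      ((PhiHat q ℓ (u * q ^ (2*ℓ)) z)⁻¹ *
        !![q ^ (-ℓ) * F (q * z), 0; 0, q ^ ℓ * F (q⁻¹ * z)] *
        PhiHat q ℓ u z) := by
  rw [PhiHat_eq_phiMatrix, cpow_ofNat_mul] at hinv
  rw [PhiHat_eq_phiMatrix, PhiHat_eq_phiMatrix, cpow_ofNat_mul, cpow_neg]
  exact lOperatorMatrix_eq_factorization hinv _ _

theorem trigonometric_L_operator_factorization (q ℓ u : ℂ)
    (hq : q ≠ 0) (hq2 : q^2 ≠ 1) (hu : u ≠ 0)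
    (F : ℂ → ℂ) (z : ℂ) (hz : z ≠ 0)
    (hinv : IsUnit (PhiHat q ℓ (u * q ^ (2*ℓ)) z).det) :
    !![u * F (q * z) - u⁻¹ * F (q⁻¹ * z),
        z⁻¹ * (q ^ ℓ * F (q * z) - q ^ (-ℓ) * F (q⁻¹ * z));
      z * (q ^ ℓ * F (q⁻¹ * z) - q ^ (-ℓ) * F (q * z)),
        u * F (q⁻¹ * z) - u⁻¹ * F (q * z)] =
    (q ^ ℓ * u - q ^ (-ℓ) * u⁻¹) •
      ((PhiHat q ℓ (u * q ^ (2*ℓ)) z)⁻¹ *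
        !![q ^ (-ℓ) * F (q * z), 0; 0, q ^ ℓ * F (q⁻¹ * z)] *
        PhiHat q ℓ u z) :=
  trigonometric_L_operator_factorization_general q ℓ u F z hinv
end

section
/- Let ∇ = T₊ + T₋ − K₊ − K₋ where T_± shift ζ ↦ ζ ± η and K_± shift x ↦ x ± η in functions of two complex variables (ζ, x), and for a function b: ℂ → ℂ define D_α = b(ζ−x)T₊ − b(ζ+x)T₋ − (b(ζ−x) − b(ζ+x))K₊ and D′_α = T₊b(ζ−x) − T₋b(ζ+x) − K₊(b(ζ−x) − b(ζ+x)) (in D′_α the function multiplications occur after the shifts). Then ∇D_α = D′_α∇ as operators, and also ∇(T₊+T₋) = (T₊+T₋)∇. In particular, the kernel of ∇ is invariant under D_α and under T₊+T₋. -/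
theorem nabla_intertwining_ell_zero (η : ℂ) (b : ℂ → ℂ)
    (nab Dop Dop' S : (ℂ → ℂ → ℂ) → (ℂ → ℂ → ℂ))
    (hnab : ∀ F ζ x, nab F ζ x =
      F (ζ + η) x + F (ζ - η) x - F ζ (x + η) - F ζ (x - η))
    (hD : ∀ F ζ x, Dop F ζ x =
      b (ζ - x) * F (ζ + η) x - b (ζ + x) * F (ζ - η) x
        - (b (ζ - x) - b (ζ + x)) * F ζ (x + η))
    (hD' : ∀ F ζ x, Dop' F ζ x =
      b (ζ + η - x) * F (ζ + η) x - b (ζ - η + x) * F (ζ - η) x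
        - (b (ζ - x - η) - b (ζ + x + η)) * F ζ (x + η))
    (hS : ∀ F ζ x, S F ζ x = F (ζ + η) x + F (ζ - η) x) :
    (∀ F, nab (Dop F) = Dop' (nab F)) ∧
    (∀ F, nab (S F) = S (nab F)) ∧
    (∀ F, nab F = 0 → nab (Dop F) = 0 ∧ nab (S F) = 0) := by
  have h1 : ∀ F, nab (Dop F) = Dop' (nab F) := by
    intro F
    funext ζ x
    simp only [hnab, hD, hD']
    ring_nf
  have h2 : ∀ F, nab (S F) = S (nab F) := by
    intro F
    funext ζ x
    simp only [hnab, hS]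
    ring_nf
  exact ⟨h1, h2, fun F hF => ⟨by rw [h1, hF]; funext ζ x; rw [hD']; simp,
    by rw [h2, hF]; funext ζ x; rw [hS]; simp⟩⟩
end
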